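/- arXiv:1210.0042 — 10 statements merged into one kernel-verified Lean document; each statement's English description precedes it below -/
import Mathlib

section
/- Let a be an odd positive integer and write a = 2^k·b + 1 with k ≥ 1 and b odd. Then the order of a/2 under χ is exactly k, i.e., χ^k(a/2) ∈ ℤ but χ^j(a/2) ∉ ℤ for all j < k. Here χ(x) = x·⌈x⌉. -/
/-- The quasi-quadratic map χ(x) = x·⌈x⌉. -/
def chi (x : ℚ) : ℚ := x * (⌈x⌉ : ℚ)

/-- `ordEq x n` says the order of `x` under `chi` is exactly `n`:
`chi^[n] x` is an integer but no earlier iterate is. -/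
def ordEq (x : ℚ) (n : ℕ) : Prop :=
  (chi^[n] x).den = 1 ∧ ∀ j < n, (chi^[j] x).den ≠ 1

lemma den_odd_div_two (n : ℕ) (hn : Odd n) : (((n : ℚ)) / 2).den = 2 := by
  have h := Rat.den_div_eq_of_coprime (a := (n : ℤ)) (b := 2) (by norm_num)
    (by simpa [Int.natAbs_natCast, Nat.coprime_two_right] using hn)
  have h2 : (((n : ℤ) : ℚ)) / ((2 : ℤ) : ℚ) = (n : ℚ) / 2 := by push_cast; ring
  rw [h2] at h
  exact_mod_cast h

lemma ceil_odd_div_two (n : ℕ) (hn : Odd (2 * n + 1)) :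
    ⌈((2 * n + 1 : ℕ) : ℚ) / 2⌉ = n + 1 := by
  have : ((2 * n + 1 : ℕ) : ℚ) / 2 = (n : ℤ) + 1 / 2 := by push_cast; ring
  rw [this, add_comm, Int.ceil_add_intCast]
  have : ⌈(1 : ℚ) / 2⌉ = 1 := by rw [Int.ceil_eq_iff] <;> norm_num
  omega

lemma chi_step (k b : ℕ) (hb : Odd b) :
    chi ((2 ^ (k + 1) * b + 1 : ℚ) / 2) =
      ((2 ^ k * (b * (2 ^ (k + 1) * b + 3)) + 1 : ℕ) : ℚ) / 2 := by
  have h1 : (2 ^ (k + 1) * b + 1 : ℚ) / 2 = ((2 * (2 ^ k * b) + 1 : ℕ) : ℚ) / 2 := by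
    push_cast; ring_nf
  have hc : ⌈((2 * (2 ^ k * b) + 1 : ℕ) : ℚ) / 2⌉ = (2 ^ k * b : ℕ) + 1 := by
    apply ceil_odd_div_two
    exact ⟨2 ^ k * b, by ring⟩
  rw [chi, h1, hc]
  push_cast
  ring

lemma ord_aux (k : ℕ) : ∀ b : ℕ, Odd b → ordEq ((2 ^ k * b + 1 : ℚ) / 2) k := by
  induction k with
  | zero =>
      intro b hb
      obtain ⟨m, hm⟩ := hb
      constructor
      · have : (2 ^ 0 * b + 1 : ℚ) / 2 = ((m + 1 : ℕ) : ℚ) := by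
          subst hm; push_cast; ring
        rw [Function.iterate_zero_apply, this, Rat.den_natCast]
      · intro j hj; omega
  | succ k ih =>
      intro b hb
      have hb' : Odd (b * (2 ^ (k + 1) * b + 3)) := by
        refine hb.mul ?_
        rcases hb with ⟨m, hm⟩
        exact ⟨2 ^ k * b + 1, by subst hm; ring⟩
      have hstep := chi_step k b hb
      obtain ⟨ih1, ih2⟩ := ih _ hb'
      have hrw : ((2 ^ k * (b * (2 ^ (k + 1) * b + 3)) + 1 : ℕ) : ℚ) / 2 =
          (2 ^ k * (b * (2 ^ (k + 1) * b + 3) : ℕ) + 1 : ℚ) / 2 := by push_cast; ring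
      constructor
      · rw [Function.iterate_succ_apply, hstep, hrw]
        exact ih1
      · intro j hj
        match j with
        | 0 =>
            simp only [Function.iterate_zero_apply]
            have h1 : (2 ^ (k + 1) * b + 1 : ℚ) / 2 = ((2 ^ (k + 1) * b + 1 : ℕ) : ℚ) / 2 := by
              push_cast; ring
            rw [h1, den_odd_div_two]
            · norm_num
            · exact ⟨2 ^ k * b, by ring⟩
        | j + 1 =>
            rw [Function.iterate_succ_apply, hstep, hrw]
            exact ih2 j (by omega)

theorem ord_half (k b : ℕ) (hk : 1 ≤ k) (hb : Odd b) :
    ordEq ((2 ^ k * b + 1 : ℚ) / 2) k := ord_aux k b hb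
end

section
/- For each k ≥ 1, the smallest positive irreducible fraction with denominator 2 whose order under χ is exactly k is (2^k + 1)/2. -/
lemma ceil_half (b : ℤ) : ⌈((2*b+1 : ℤ) : ℚ)/2⌉ = b + 1 := by
  rw [Int.ceil_eq_iff]
  push_cast
  constructor <;> nlinarith

lemma chi_half (b : ℤ) :
    chi (((2*b+1 : ℤ) : ℚ)/2) = (((2*b+1)*(b+1) : ℤ) : ℚ)/2 := by
  unfold chi
  rw [ceil_half]
  push_cast
  ring

lemma den_half_iff (a : ℤ) : (((a : ℤ) : ℚ)/2).den = 1 ↔ 2 ∣ a := by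
  have h := Rat.den_div_intCast_eq_one_iff a 2 (by norm_num)
  push_cast at h
  exact h

lemma den_half_odd (a : ℤ) (ha : Odd a) : (((a : ℤ) : ℚ)/2).den ≠ 1 := by
  rw [Ne, den_half_iff]
  rw [Int.odd_iff] at ha
  omega

lemma ord_of : ∀ k : ℕ, 1 ≤ k → ∀ u : ℤ, Odd u →
    ordEq (((2^k * u + 1 : ℤ) : ℚ)/2) k := by
  intro k hk
  induction k, hk using Nat.le_induction with
  | base =>
    intro u hu
    obtain ⟨v, hv⟩ := hu
    constructor
    · have h1 : ((2^1 * u + 1 : ℤ) : ℚ)/2 = ((2*u+1 : ℤ) : ℚ)/2 := by norm_num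
      rw [Function.iterate_one, h1, chi_half, den_half_iff]
      exact ⟨(2*u+1)*(v+1), by rw [hv]; ring⟩
    · intro j hj
      interval_cases j
      simp only [Function.iterate_zero, id_eq]
      exact den_half_odd _ ⟨u, by ring⟩
  | succ k hk ih =>
    intro u hu
    have key : chi (((2^(k+1) * u + 1 : ℤ) : ℚ)/2)
        = ((2^k * (u * (2^(k+1)*u + 3)) + 1 : ℤ) : ℚ)/2 := by
      have h1 : (2^(k+1) * u + 1 : ℤ) = 2*(2^k*u)+1 := by ring
      rw [h1, chi_half]
      congr 2
      ring
    have hu' : Odd (u * (2^(k+1)*u + 3)) :=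
      hu.mul (by rcases hu with ⟨v, hv⟩; exact ⟨2^k*(2*v+1) + 1, by rw [hv]; ring⟩)
    have H := ih (u * (2^(k+1)*u + 3)) hu'
    constructor
    · rw [Function.iterate_succ_apply, key]
      exact H.1
    · intro j hj
      match j with
      | 0 =>
        simp only [Function.iterate_zero, id_eq]
        exact den_half_odd _ ⟨2^k * u, by ring⟩
      | j+1 =>
        rw [Function.iterate_succ_apply, key]
        exact H.2 j (by omega)

lemma ordEq_unique {x : ℚ} {m n : ℕ} (hm : ordEq x m) (hn : ordEq x n) : m = n := by
  by_contra h
  rcases Nat.lt_or_ge m n with hlt | hge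
  · exact hn.2 m hlt hm.1
  · exact hm.2 n (by omega) hn.1

lemma chi_iter_half_one (n : ℕ) : chi^[n] ((1 : ℚ)/2) = (1 : ℚ)/2 := by
  induction n with
  | zero => rfl
  | succ n ih =>
    rw [Function.iterate_succ_apply', ih]
    unfold chi
    rw [show ⌈(1:ℚ)/2⌉ = 1 by rw [Int.ceil_eq_iff]; norm_num]
    norm_num

theorem smallest_order_k_denom_two (k : ℕ) (hk : 1 ≤ k) :
    ordEq ((2 ^ k + 1 : ℚ) / 2) k ∧
      ∀ a : ℕ, 0 < a → Odd a → ordEq ((a : ℚ) / 2) k → (2 ^ k + 1 : ℚ) / 2 ≤ (a : ℚ) / 2 := by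
  constructor
  · have := ord_of k hk 1 odd_one
    have h : ((2^k * 1 + 1 : ℤ) : ℚ)/2 = (2^k + 1 : ℚ)/2 := by push_cast; ring_nf
    rwa [h] at this
  · intro a ha hodd hord
    rcases eq_or_ne a 1 with rfl | hne
    · exfalso
      have := hord.1
      rw [show ((1:ℕ):ℚ)/2 = (1:ℚ)/2 by norm_num, chi_iter_half_one] at this
      have h2 : ((1:ℚ)/2).den ≠ 1 := by
        have := den_half_odd 1 odd_one
        simpa using this
      exact h2 this
    · have ha1 : a - 1 ≠ 0 := by omega
      obtain ⟨m, u, hu, hmu⟩ := Nat.exists_eq_two_pow_mul_odd ha1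
      have hm : 1 ≤ m := by
        rcases Nat.eq_zero_or_pos m with rfl | h
        · exfalso
          rw [pow_zero, one_mul] at hmu
          rcases hodd with ⟨t, ht⟩
          rcases hu with ⟨s, hs⟩
          omega
        · exact h
      have heq : (a : ℤ) = 2^m * (u : ℤ) + 1 := by
        have : a = 2^m * u + 1 := by omega
        exact_mod_cast congrArg (Nat.cast : ℕ → ℤ) this
      have hordm : ordEq ((a : ℚ)/2) m := by
        have := ord_of m hm (u : ℤ) (by exact_mod_cast hu)
        rwa [← heq, Int.cast_natCast] at this
      have hkm : k = m := ordEq_unique hord hordm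
      subst hkm
      have hu1 : 1 ≤ u := by
        rcases Nat.eq_zero_or_pos u with rfl | h
        · omega
        · exact h
      have hle : 2^k + 1 ≤ a := by
        calc 2^k + 1 ≤ 2^k * u + 1 := by nlinarith
        _ = a := by omega
      have : (2^k + 1 : ℚ) ≤ (a : ℚ) := by exact_mod_cast hle
      linarith
end

section
/- Let M > 1 be a positive integer and a an integer with gcd(a, M) = 1. Then the order of a/M under χ equals 1 if and only if there exists r ∈ {1, 2, ..., M-1} with gcd(r, M) = 1 such that a ≡ -r (mod M²). -/
theorem ord_eq_one_iff (M : ℕ) (hM : 1 < M) (a : ℤ) (ha : Int.gcd a M = 1) :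
    ordEq ((a : ℚ) / M) 1 ↔
      ∃ r : ℕ, 1 ≤ r ∧ r < M ∧ Nat.Coprime r M ∧ a ≡ -(r : ℤ) [ZMOD ((M : ℤ) ^ 2)] := by
  have hM0 : (0:ℤ) < (M:ℤ) := by exact_mod_cast Nat.lt_of_lt_of_le Nat.zero_lt_one hM.le
  have hMne : (M:ℤ) ≠ 0 := hM0.ne'
  set x : ℚ := (a : ℚ) / M with hx
  -- denominator of x is M
  have hcop : Nat.Coprime a.natAbs ((M:ℤ)).natAbs := by
    simpa [Int.gcd, Int.natAbs_natCast] using ha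
  have hdenx : x.den = M := by
    have := Rat.den_div_eq_of_coprime hM0 hcop
    simpa using this
  -- ceiling of x
  set q : ℤ := (-a) / (M:ℤ) with hq
  set r0 : ℤ := (-a) % (M:ℤ) with hr0
  have hceil : ⌈x⌉ = -q := by
    have h1 : ⌊-x⌋ = q := by
      have : -x = ((-a : ℤ) : ℚ) / (M : ℕ) := by push_cast [hx]; ring
      rw [this, Rat.floor_intCast_div_natCast]
    have h2 : ⌊-x⌋ = -⌈x⌉ := Int.floor_neg
    omega
  have hkey : a + r0 = (M:ℤ) * (-q) := by
    have := Int.emod_add_mul_ediv (-a) (M:ℤ)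
    rw [← hq, ← hr0] at this
    linarith
  have hr0nonneg : 0 ≤ r0 := Int.emod_nonneg _ hMne
  have hr0lt : r0 < M := Int.emod_lt_of_pos _ hM0
  have hcopa : IsCoprime a (M:ℤ) := Int.isCoprime_iff_gcd_eq_one.mpr ha
  have hr0ne : r0 ≠ 0 := by
    intro h
    have hdvd : (M:ℤ) ∣ a := by
      have : (M:ℤ) ∣ -a := Int.dvd_of_emod_eq_zero (by rw [← hr0]; exact h)
      exact (dvd_neg).mp this
    have hu : IsUnit ((M:ℤ)) := hcopa.isUnit_of_dvd' hdvd dvd_rfl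
    rcases Int.isUnit_iff.mp hu with h' | h' <;> omega
  -- chi x as a fraction
  have hchi : chi x = ((a * (-q) : ℤ) : ℚ) / M := by
    rw [chi, hceil, hx]; push_cast; ring
  have hchiden : (chi x).den = 1 ↔ (M:ℤ) ∣ a * (-q) := by
    rw [hchi]
    exact Rat.den_div_intCast_eq_one_iff _ _ hMne
  have hdvd_iff : (M:ℤ) ∣ a * (-q) ↔ (M:ℤ) ∣ (-q) := by
    constructor
    · intro h
      exact (hcopa.symm.dvd_of_dvd_mul_left h)
    · intro h
      exact h.mul_left a
  constructor
  · rintro ⟨h1, _⟩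
    rw [Function.iterate_one] at h1
    obtain ⟨k, hk⟩ := hdvd_iff.mp (hchiden.mp h1)
    refine ⟨r0.toNat, ?_, ?_, ?_, ?_⟩
    · omega
    · omega
    · -- coprimality of r0 with M
      have : IsCoprime r0 (M:ℤ) := by
        have h1 : IsCoprime (-a) (M:ℤ) := hcopa.neg_left
        have h2 : IsCoprime (-a + (M:ℤ) * (-q)) (M:ℤ) := h1.add_mul_left_left _
        have : r0 = -a + (M:ℤ) * (-q) := by linarith [hkey]
        rwa [← this] at h2
      have := Int.isCoprime_iff_gcd_eq_one.mp this
      have hna : r0.natAbs = r0.toNat := by omega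
      simpa [Int.gcd, Nat.Coprime, hna] using this
    · refine Int.modEq_iff_dvd.mpr ?_
      have h2 : -(((r0.toNat : ℕ) : ℤ)) - a = -(a + r0) := by
        rw [Int.toNat_of_nonneg hr0nonneg]; ring
      rw [h2, hkey, hk]
      exact ⟨-k, by ring⟩
  · rintro ⟨r, hr1, hrM, hrcop, hmod⟩
    have hdvd2 : ((M:ℤ)^2) ∣ (a + (r:ℤ)) := by
      have := Int.modEq_iff_dvd.mp hmod
      have h : -(r:ℤ) - a = -(a + r) := by ring
      rw [h] at this
      exact (dvd_neg).mp this
    -- r0 = r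
    have hreq : r0 = (r:ℤ) := by
      have hMdvd : (M:ℤ) ∣ (a + (r:ℤ)) := dvd_trans ⟨(M:ℤ), by ring⟩ hdvd2
      have : (-a) % (M:ℤ) = (r:ℤ) % (M:ℤ) := by
        have h : (-a) ≡ (r:ℤ) [ZMOD (M:ℤ)] := Int.modEq_iff_dvd.mpr (by
          have h : (r:ℤ) - (-a) = a + r := by ring
          rw [h]; exact hMdvd)
        exact h
      rw [hr0, this, Int.emod_eq_of_lt (by positivity) (by exact_mod_cast hrM)]
    obtain ⟨k, hk⟩ := hdvd2
    have hqdvd : (M:ℤ) ∣ (-q) := by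
      have : (M:ℤ) * (-q) = (M:ℤ) * ((M:ℤ) * k) := by
        rw [← hkey, hreq, hk]; ring
      exact ⟨k, mul_left_cancel₀ hMne this⟩
    constructor
    · rw [Function.iterate_one]
      exact hchiden.mpr (hdvd_iff.mpr hqdvd)
    · intro j hj
      interval_cases j
      simp only [Function.iterate_zero, id_eq]
      rw [hdenx]
      omega
end

section
/- Let M > 1, n ≥ 1 be integers and a an integer with gcd(a, M) = 1 and ord(a/M) = n. Then for every integer t, ord(a/M + t·M^n) = n. Consequently, the set {a ∈ ℤ : gcd(a,M)=1 and ord(a/M) = n} is a union of congruence classes modulo M^{n+1}. -/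
lemma den_add_int (q : ℚ) (z : ℤ) : (q + (z : ℚ)).den = q.den := by
  refine Nat.dvd_antisymm ?_ ?_
  · have := Rat.add_den_dvd q (z : ℚ)
    simpa using this
  · have := Rat.add_den_dvd (q + (z : ℚ)) ((-z : ℤ) : ℚ)
    simpa using this

lemma den_chi_dvd (x : ℚ) : (chi x).den ∣ x.den := by
  have := Rat.mul_den_dvd x ((⌈x⌉ : ℤ) : ℚ)
  simpa [chi] using this

lemma den_iter_dvd (x : ℚ) (j : ℕ) : (chi^[j] x).den ∣ x.den := by
  induction j with
  | zero => simp
  | succ j ih =>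
    rw [Function.iterate_succ_apply']
    exact (den_chi_dvd _).trans ih

lemma chi_add_int (x : ℚ) (c : ℤ) :
    chi (x + (c : ℚ)) = chi x + (c : ℚ) * (x + (⌈x⌉ : ℚ) + (c : ℚ)) := by
  unfold chi
  rw [Int.ceil_add_intCast]
  push_cast
  ring

lemma int_mul_of_den_dvd {y : ℚ} {M : ℕ} (h : y.den ∣ M) :
    ∃ k : ℤ, (M : ℚ) * y = (k : ℚ) := by
  obtain ⟨m, hm⟩ := h
  refine ⟨(m : ℤ) * y.num, ?_⟩
  have hd : (y.den : ℚ) ≠ 0 := by exact_mod_cast y.den_nz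
  have h1 : (y.den : ℚ) * y = (y.num : ℚ) := by
    have h2 := Rat.num_div_den y
    rw [div_eq_iff hd] at h2
    linear_combination -h2
  rw [hm]
  push_cast
  linear_combination (m : ℚ) * h1

/-- Key lemma: iterates of a perturbation of `x` by an integer multiple of `M^(j+k)`
track the iterates of `x` up to integer multiples of decreasing powers of `M`. -/
lemma iter_perturb (M : ℕ) (x : ℚ) (hx : x.den ∣ M) :
    ∀ j k : ℕ, ∀ s : ℤ,
      ∃ s' : ℤ, chi^[j] (x + (s : ℚ) * (M : ℚ) ^ (j + k)) =
        chi^[j] x + (s' : ℚ) * (M : ℚ) ^ k := by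
  intro j
  induction j with
  | zero => intro k s; exact ⟨s, by simp⟩
  | succ j ih =>
    intro k s
    obtain ⟨s', hs'⟩ := ih (k + 1) s
    have hsj : j + 1 + k = j + (k + 1) := by omega
    rw [hsj, Function.iterate_succ_apply', Function.iterate_succ_apply', hs']
    set y := chi^[j] x with hy
    have hyd : y.den ∣ M := (den_iter_dvd x j).trans hx
    obtain ⟨m, hm⟩ := int_mul_of_den_dvd hyd
    have hcast : y + (s' : ℚ) * (M : ℚ) ^ (k + 1) = y + ((s' * (M : ℤ) ^ (k + 1) : ℤ) : ℚ) := by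
      push_cast; ring
    rw [hcast, chi_add_int]
    refine ⟨s' * m + s' * ⌈y⌉ * (M : ℤ) + s' ^ 2 * (M : ℤ) ^ (k + 2), ?_⟩
    have key : ((s' * (M : ℤ) ^ (k + 1) : ℤ) : ℚ) * (y + (⌈y⌉ : ℚ) + ((s' * (M : ℤ) ^ (k + 1) : ℤ) : ℚ))
        = ((s' * m + s' * ⌈y⌉ * (M : ℤ) + s' ^ 2 * (M : ℤ) ^ (k + 2) : ℤ) : ℚ) * (M : ℚ) ^ k := by
      push_cast
      have hmy : (M : ℚ) * y = (m : ℚ) := hm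
      calc (s' : ℚ) * (M : ℚ) ^ (k + 1) * (y + (⌈y⌉ : ℚ) + (s' : ℚ) * (M : ℚ) ^ (k + 1))
          = ((s' : ℚ) * ((M : ℚ) * y) + (s' : ℚ) * (⌈y⌉ : ℚ) * (M : ℚ)
              + (s' : ℚ) ^ 2 * (M : ℚ) ^ (k + 2)) * (M : ℚ) ^ k := by ring
        _ = ((s' : ℚ) * (m : ℚ) + (s' : ℚ) * (⌈y⌉ : ℚ) * (M : ℚ)
              + (s' : ℚ) ^ 2 * (M : ℚ) ^ (k + 2)) * (M : ℚ) ^ k := by rw [hmy]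
    rw [key]

theorem ord_congruence_classes (M : ℕ) (hM : 1 < M) (n : ℕ) (hn : 1 ≤ n)
    (a : ℤ) (ha : Int.gcd a M = 1) (hord : ordEq ((a : ℚ) / M) n) :
    (∀ t : ℤ, ordEq ((a : ℚ) / M + t * (M : ℚ) ^ n) n) ∧
      ∀ b : ℤ, b ≡ a [ZMOD ((M : ℤ) ^ (n + 1))] →
        Int.gcd b M = 1 ∧ ordEq ((b : ℚ) / M) n := by
  have hM0 : (M : ℚ) ≠ 0 := by positivity
  -- denominator of c/M divides M for any integer c
  have hden : ∀ c : ℤ, ((c : ℚ) / M).den ∣ M := by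
    intro c
    have h1 : ((Rat.divInt c (M : ℤ)).den : ℤ) ∣ (M : ℤ) := Rat.den_dvd c (M : ℤ)
    have h2 : Rat.divInt c (M : ℤ) = (c : ℚ) / M := by
      rw [Rat.divInt_eq_div]; push_cast; ring
    rw [h2] at h1
    exact_mod_cast h1
  -- main claim for a fixed base point with denominator dividing M and ordEq n
  have main : ∀ x : ℚ, x.den ∣ M → ordEq x n → ∀ t : ℤ,
      ordEq (x + (t : ℚ) * (M : ℚ) ^ n) n := by
    intro x hx hordx t
    constructor
    · obtain ⟨s', hs'⟩ := iter_perturb M x hx n 0 t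
      rw [show n + 0 = n from rfl] at hs'
      rw [hs']
      simp only [pow_zero, mul_one]
      rw [den_add_int]
      exact hordx.1
    · intro j hj
      obtain ⟨s', hs'⟩ := iter_perturb M x hx j (n - j) t
      rw [show j + (n - j) = n by omega] at hs'
      rw [hs']
      have : (s' : ℚ) * (M : ℚ) ^ (n - j) = ((s' * (M : ℤ) ^ (n - j) : ℤ) : ℚ) := by
        push_cast; ring
      rw [this, den_add_int]
      exact hordx.2 j hj
  refine ⟨fun t => main _ (hden a) hord t, ?_⟩
  intro b hb
  obtain ⟨t, ht⟩ := (Int.ModEq.dvd hb : ((M : ℤ) ^ (n + 1)) ∣ a - b)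
  have hbt : b = a + (-t) * (M : ℤ) ^ (n + 1) := by linarith [ht]
  constructor
  · have hco : IsCoprime a (M : ℤ) := Int.isCoprime_iff_gcd_eq_one.mpr ha
    have : IsCoprime (a + (M : ℤ) * ((-t) * (M : ℤ) ^ n)) (M : ℤ) :=
      hco.add_mul_left_left _
    have hbeq : b = a + (M : ℤ) * ((-t) * (M : ℤ) ^ n) := by rw [hbt]; ring
    rw [← hbeq] at this
    exact Int.isCoprime_iff_gcd_eq_one.mp this
  · have hbq : (b : ℚ) / M = (a : ℚ) / M + ((-t : ℤ) : ℚ) * (M : ℚ) ^ n := by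
      rw [hbt]; push_cast; field_simp; ring
    rw [hbq]
    exact main _ (hden a) hord _
end

section
/- Let M > 1, n ≥ 1 be integers, a an integer with gcd(a, M) = 1 and ord(a/M) = n, and t an integer. If χ(a/M) = a'/M' in lowest terms, then χ(a/M + t·M^n) = a'/M' + m·M^{n-1} for some integer m. -/
theorem chi_shift (M : ℕ) (hM : 1 < M) (n : ℕ) (hn : 1 ≤ n)
    (a : ℤ) (ha : Int.gcd a M = 1) (hord : ordEq ((a : ℚ) / M) n) (t : ℤ) :
    ∃ m : ℤ, chi ((a : ℚ) / M + t * (M : ℚ) ^ n) = chi ((a : ℚ) / M) + m * (M : ℚ) ^ (n - 1) := by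
  obtain ⟨k, rfl⟩ : ∃ k, n = k + 1 := ⟨n - 1, by omega⟩
  refine ⟨t * a + t * M * ⌈(a : ℚ) / M⌉ + t ^ 2 * M ^ (k + 2), ?_⟩
  have hMne : (M : ℚ) ≠ 0 := by positivity
  have hceil : ⌈(a : ℚ) / M + t * (M : ℚ) ^ (k + 1)⌉ = ⌈(a : ℚ) / M⌉ + t * M ^ (k + 1) := by
    rw [show ((t : ℚ) * (M : ℚ) ^ (k + 1)) = ((t * M ^ (k + 1) : ℤ) : ℚ) by push_cast; ring,
      Int.ceil_add_intCast]
  unfold chi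
  rw [hceil]
  simp only [Nat.add_sub_cancel]
  push_cast
  field_simp
  ring
end

section
/- For a prime p and integer n ≥ 0, the following rational number has order exactly n under χ: ((p-1)·p^n + 1)/p. That is, χ^n of this number is an integer but χ^j of it is not an integer for j < n. -/
lemma den_one_of_dvd (p : ℕ) (hp : 0 < p) (N : ℤ) (h : (p : ℤ) ∣ N) :
    ((N : ℚ) / p).den = 1 := by
  obtain ⟨k, rfl⟩ := h
  have hp0 : (p : ℚ) ≠ 0 := by positivity
  rw [show (((p : ℤ) * k : ℤ) : ℚ) / p = (k : ℚ) by push_cast; field_simp,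
    Rat.den_intCast]

lemma den_ne_one_of_not_dvd (p : ℕ) (hp : 2 ≤ p) (N : ℤ) (h : ¬ (p : ℤ) ∣ N) :
    ((N : ℚ) / p).den ≠ 1 := by
  intro hden
  apply h
  have hp0 : (p : ℚ) ≠ 0 := by positivity
  set x : ℚ := (N : ℚ) / p with hx
  have h1 : (x.num : ℚ) = x := (Rat.den_eq_one_iff x).mp hden
  have h2 : (x.num : ℚ) * p = (N : ℚ) := by
    rw [h1, hx]; field_simp
  have h3 : x.num * p = N := by exact_mod_cast h2
  exact ⟨x.num, by linarith⟩

lemma key (p : ℕ) (hp : p.Prime) : ∀ m : ℕ, ∀ N : ℤ,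
    (p : ℤ) ^ (m + 1) ∣ N - (((p : ℤ) - 1) * (p : ℤ) ^ m + 1) →
    (chi^[m] ((N : ℚ) / p)).den = 1 ∧ ∀ j < m, (chi^[j] ((N : ℚ) / p)).den ≠ 1 := by
  have hp2 : 2 ≤ p := hp.two_le
  have hq2 : (2 : ℤ) ≤ (p : ℤ) := by exact_mod_cast hp2
  have hp0 : (p : ℚ) ≠ 0 := by positivity
  have hppos : (0 : ℚ) < (p : ℚ) := by positivity
  intro m
  induction m with
  | zero =>
    intro N hdvd
    simp only [pow_one, pow_zero, mul_one] at hdvd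
    have hdN : (p : ℤ) ∣ N := by
      obtain ⟨c, hc⟩ := hdvd
      exact ⟨c + 1, by linear_combination hc⟩
    refine ⟨?_, by omega⟩
    simpa using den_one_of_dvd p hp.pos N hdN
  | succ m ih =>
    intro N hdvd
    obtain ⟨d, hd⟩ := hdvd
    set q : ℤ := (p : ℤ) with hqdef
    set K : ℤ := (q - 1) * q ^ m + q ^ (m + 1) * d with hK
    have hN : N = q * K + 1 := by rw [hK]; linear_combination hd
    have hndvd : ¬ q ∣ N := by
      rintro ⟨e, he⟩
      have h1 : q ∣ 1 := ⟨e - K, by linear_combination he - hN⟩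
      have := Int.le_of_dvd one_pos h1
      omega
    -- value and ceiling of N/p
    have hxval : (N : ℚ) / p = (K : ℚ) + 1 / p := by
      rw [hN]; push_cast [hqdef]; field_simp
    have hceil : ⌈(N : ℚ) / p⌉ = K + 1 := by
      rw [hxval, add_comm, Int.ceil_add_intCast]
      have h1 : ⌈(1 : ℚ) / p⌉ = 1 := by
        rw [Int.ceil_eq_iff]
        have ha : (0 : ℚ) < 1 / p := by positivity
        have hb : (1 : ℚ) / p ≤ 1 := by
          rw [div_le_one hppos]
          exact_mod_cast Nat.one_le_of_lt hp2
        constructor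
        · push_cast; linarith
        · push_cast; linarith
      omega
    -- one step of chi
    have hchi : chi ((N : ℚ) / p) = ((N * (K + 1) : ℤ) : ℚ) / p := by
      rw [chi, hceil]; push_cast; ring
    have hdvd' : q ^ (m + 1) ∣ N * (K + 1) - ((q - 1) * q ^ m + 1) :=
      ⟨(q - 1 + q * d) * K + (q - 1) + q * d + d, by rw [hN, hK]; ring⟩
    have hmain := ih (N * (K + 1)) hdvd'
    refine ⟨?_, ?_⟩
    · rw [Function.iterate_succ_apply, hchi]
      exact hmain.1
    · intro j hj
      match j with
      | 0 =>
        simpa using den_ne_one_of_not_dvd p hp2 N hndvd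
      | Nat.succ j =>
        rw [Function.iterate_succ_apply, hchi]
        exact hmain.2 j (by omega)

theorem ord_example_one (p : ℕ) (hp : p.Prime) (hodd : Odd p) (n : ℕ) :
    ordEq ((((p : ℚ) - 1) * (p : ℚ) ^ n + 1) / p) n := by
  have h := key p hp n (((p : ℤ) - 1) * (p : ℤ) ^ n + 1) (by simp)
  have hx : (((p : ℚ) - 1) * (p : ℚ) ^ n + 1) / p
      = (((((p : ℤ) - 1) * (p : ℤ) ^ n + 1 : ℤ)) : ℚ) / p := by
    push_cast; ring
  rw [ordEq, hx]
  exact h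
end

section
/- For an odd prime p and n ≥ 2, the rational number (-(n+1)·p^n + p^{n-1} + 1)/p has order exactly n under χ. -/
lemma ceil_div_eq (p d r N : ℤ) (hr : 0 < r) (hrp : r ≤ p) (h : N = p * d + r) :
    ⌈(N : ℚ) / (p : ℚ)⌉ = d + 1 := by
  have hp : (0:ℤ) < p := lt_of_lt_of_le hr hrp
  have hpq : (0:ℚ) < (p:ℚ) := by exact_mod_cast hp
  have hrq : (0:ℚ) < (r:ℚ) := by exact_mod_cast hr
  have hrpq : (r:ℚ) ≤ (p:ℚ) := by exact_mod_cast hrp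
  rw [Int.ceil_eq_iff]
  constructor
  · rw [lt_div_iff₀ hpq]
    have : (N:ℚ) = p * d + r := by exact_mod_cast h
    rw [this]; push_cast; nlinarith
  · rw [div_le_iff₀ hpq]
    have : (N:ℚ) = p * d + r := by exact_mod_cast h
    rw [this]; push_cast; nlinarith

lemma chi_div (p N : ℤ) : chi ((N:ℚ)/(p:ℚ)) = ((N * ⌈(N:ℚ)/(p:ℚ)⌉ : ℤ) : ℚ)/(p:ℚ) := by
  unfold chi; push_cast; ring

lemma den_ne_one (p N : ℤ) (hp : p ≠ 0) (h : ¬ p ∣ N) : ((N:ℚ)/(p:ℚ)).den ≠ 1 := by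
  intro h1
  apply h
  have hq : (((((N:ℚ)/(p:ℚ)).num : ℤ)):ℚ) = (N:ℚ)/(p:ℚ) := by
    rw [← Rat.den_eq_one_iff]; exact h1
  have hpq : (p:ℚ) ≠ 0 := by exact_mod_cast hp
  have : ((((N:ℚ)/(p:ℚ)).num : ℤ):ℚ) * (p:ℚ) = (N:ℚ) := by
    rw [hq]; field_simp
  have hz : (((N:ℚ)/(p:ℚ)).num) * p = N := by exact_mod_cast this
  exact ⟨((N:ℚ)/(p:ℚ)).num, by linarith⟩

lemma ordEq_succ {x : ℚ} {m : ℕ} (hx : x.den ≠ 1) (h : ordEq (chi x) m) : ordEq x (m+1) := by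
  refine ⟨?_, ?_⟩
  · rw [Function.iterate_succ_apply]; exact h.1
  · intro j hj
    cases j with
    | zero => simpa using hx
    | succ i => rw [Function.iterate_succ_apply]; exact h.2 i (by omega)

lemma ord1 (p : ℤ) (hp : 3 ≤ p) (N M : ℤ) (h : N = 2 - p + M * p^2) :
    ordEq ((N:ℚ)/(p:ℚ)) 1 := by
  have hp0 : p ≠ 0 := by omega
  have hpq : (p:ℚ) ≠ 0 := by exact_mod_cast hp0
  have hd : N = p * (M*p - 1) + 2 := by rw [h]; ring
  have hc : ⌈(N:ℚ)/(p:ℚ)⌉ = (M*p - 1) + 1 := ceil_div_eq p (M*p-1) 2 N (by norm_num) (by omega) hd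
  constructor
  · show (chi^[1] ((N:ℚ)/(p:ℚ))).den = 1
    rw [Function.iterate_one]
    have : chi ((N:ℚ)/(p:ℚ)) = ((N*M : ℤ):ℚ) := by
      rw [chi_div p N, hc]
      push_cast
      field_simp
      ring
    rw [this]
    exact Rat.den_intCast _
  · intro j hj
    interval_cases j
    show (chi^[0] ((N:ℚ)/(p:ℚ))).den ≠ 1
    rw [Function.iterate_zero_apply]
    apply den_ne_one p N hp0
    intro hdvd
    have h2 : (2:ℤ) = N - p * (M*p - 1) := by rw [hd]; ring
    have : p ∣ 2 := h2 ▸ dvd_sub hdvd (Dvd.intro _ rfl)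
    have := Int.le_of_dvd (by norm_num) this
    omega

lemma key_s14 (p : ℤ) (hp : 3 ≤ p) :
    ∀ k : ℕ, ∀ N M : ℤ,
      N = 1 + p^(k+1) - ((k:ℤ)+3)*p^(k+2) + M*p^(k+3) → ordEq ((N:ℚ)/(p:ℚ)) (k+2) := by
  have hp0 : p ≠ 0 := by omega
  intro k
  induction k with
  | zero =>
    intro N M h
    norm_num at h
    -- N = 1 + p - 3p² + Mp³
    have hd : N = p * (1 - 3*p + M*p^2) + 1 := by rw [h]; ring
    have hc : ⌈(N:ℚ)/(p:ℚ)⌉ = (1 - 3*p + M*p^2) + 1 := ceil_div_eq p _ 1 N one_pos (by omega) hd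
    show ordEq ((N:ℚ)/(p:ℚ)) (1+1)
    apply ordEq_succ
    · apply den_ne_one p N hp0
      intro hdvd
      have h1 : (1:ℤ) = N - p * (1 - 3*p + M*p^2) := by rw [hd]; ring
      have : p ∣ 1 := h1 ▸ dvd_sub hdvd (Dvd.intro _ rfl)
      have := Int.le_of_dvd (by norm_num) this
      omega
    · rw [chi_div p N, hc]
      apply ord1 p hp _ (M - 9 + (3*M+9)*p - 6*M*p^2 + M^2*p^3)
      rw [h]; ring
  | succ k ih =>
    intro N M h
    push_cast at h
    -- h : N = 1 + p^(k+2) - (k+4)p^(k+3) + M p^(k+4)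
    have hd : N = p * (p^(k+1) - ((k:ℤ)+4)*p^(k+2) + M*p^(k+3)) + 1 := by
      rw [h]; ring
    set d : ℤ := p^(k+1) - ((k:ℤ)+4)*p^(k+2) + M*p^(k+3) with hdef
    have hc : ⌈(N:ℚ)/(p:ℚ)⌉ = d + 1 := ceil_div_eq p d 1 N one_pos (by omega) hd
    show ordEq ((N:ℚ)/(p:ℚ)) ((k+2)+1)
    apply ordEq_succ
    · apply den_ne_one p N hp0
      intro hdvd
      have h1 : (1:ℤ) = N - p * d := by rw [hd]; ring
      have : p ∣ 1 := h1 ▸ dvd_sub hdvd (Dvd.intro _ rfl)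
      have := Int.le_of_dvd (by norm_num) this
      omega
    · rw [chi_div p N, hc]
      apply ih _ (M + p^k - ((k:ℤ)+4)*p^(k+1) + M*p^(k+2) - ((k:ℤ)+4)*(d+1) + M*p*(d+1))
      rw [h, hdef]; ring

theorem ord_example_three (p : ℕ) (hp : p.Prime) (hodd : Odd p) (n : ℕ) (hn : 2 ≤ n) :
    ordEq ((-((n : ℚ) + 1) * (p : ℚ) ^ n + (p : ℚ) ^ (n - 1) + 1) / p) n := by
  have hp2 : 2 ≤ p := hp.two_le
  have hne2 : p ≠ 2 := by
    rintro rfl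
    exact absurd hodd (by decide)
  have hp3 : 3 ≤ (p:ℤ) := by exact_mod_cast (by omega : 3 ≤ p)
  obtain ⟨k, rfl⟩ : ∃ k, n = k + 2 := ⟨n - 2, by omega⟩
  have key' := key_s14 (p:ℤ) hp3 k (1 + (p:ℤ)^(k+1) - ((k:ℤ)+3)*(p:ℤ)^(k+2)) 0 (by ring)
  have hsub : k + 2 - 1 = k + 1 := rfl
  rw [hsub]
  convert key' using 2
  push_cast
  ring
  norm_cast
end

section
/- For a prime p and integers k ≥ 1, n ≥ 1, A(n, p^k) = C(n+k-2, n-1)·(φ(p^k))^n, where C denotes the binomial coefficient and φ is Euler's totient function. -/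
attribute [local instance] Classical.propDecidable

/-- `A n M`: the number of congruence classes modulo `M^(n+1)` of integers `a`
coprime to `M` with `ord (a/M) = n` (counted via representatives in `[0, M^(n+1))`). -/
noncomputable def A (n M : ℕ) : ℕ :=
  Nat.card {a : ℕ // a < M ^ (n + 1) ∧ Nat.Coprime a M ∧ ordEq ((a : ℚ) / M) n}

/-- integer numerator sequence of the iterates of `chi` on `a / K` (denominator kept `K`). -/
def Nseq (K : ℕ) (a : ℤ) : ℕ → ℤ
  | 0 => a
  | j+1 => Nseq K a j * ⌈(Nseq K a j : ℚ) / (K : ℚ)⌉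

lemma chi_iter (K : ℕ) (a : ℤ) : ∀ j, chi^[j] ((a : ℚ) / K) = (Nseq K a j : ℚ) / K := by
  intro j
  induction j with
  | zero => simp [Nseq]
  | succ j ih =>
    rw [Function.iterate_succ_apply', ih, chi, Nseq]
    push_cast
    ring

lemma den_one_iff (K : ℕ) (hK : K ≠ 0) (b : ℤ) :
    ((b : ℚ) / (K : ℚ)).den = 1 ↔ (K : ℤ) ∣ b := by
  constructor
  · intro h
    have h2 : (((b : ℚ) / K).num : ℚ) = (b : ℚ) / K := by
      rw [← Rat.num_div_den ((b : ℚ) / K), h]; simp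
    have hK' : (K : ℚ) ≠ 0 := by exact_mod_cast hK
    refine ⟨((b : ℚ) / K).num, ?_⟩
    have : (b : ℚ) = (K : ℚ) * (((b : ℚ) / K).num : ℚ) := by
      rw [h2]; field_simp
    exact_mod_cast this
  · rintro ⟨t, rfl⟩
    have hK' : (K : ℚ) ≠ 0 := by exact_mod_cast hK
    have : ((K * t : ℤ) : ℚ) / (K : ℚ) = (t : ℚ) := by
      push_cast; field_simp
    rw [this, Rat.den_intCast]

lemma ordEq_iff (K : ℕ) (hK : K ≠ 0) (a : ℤ) (n : ℕ) :
    ordEq ((a : ℚ) / K) n ↔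
      ((K : ℤ) ∣ Nseq K a n ∧ ∀ j < n, ¬ (K : ℤ) ∣ Nseq K a j) := by
  simp only [ordEq, chi_iter, ne_eq, den_one_iff K hK]

lemma Nseq_congr (K : ℕ) (hK : K ≠ 0) (a a' : ℤ) (n : ℕ)
    (h : (K : ℤ) ^ (n + 1) ∣ a - a') :
    ∀ j ≤ n, (K : ℤ) ^ (n + 1 - j) ∣ Nseq K a j - Nseq K a' j := by
  intro j
  induction j with
  | zero => intro _; simpa [Nseq] using h
  | succ j ih =>
    intro hj
    have hj' : j ≤ n := le_of_lt (Nat.lt_of_succ_le hj)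
    have IH := ih hj'
    have he : n + 1 - j = (n - j - 1) + 1 + 1 := by omega
    set e : ℕ := n - j - 1 with hedef
    rw [he] at IH
    obtain ⟨u, hu⟩ := IH
    have hKQ : (K : ℚ) ≠ 0 := by exact_mod_cast hK
    have hceil : ⌈(Nseq K a j : ℚ) / K⌉ = ⌈(Nseq K a' j : ℚ) / K⌉ + (K : ℤ) ^ (e+1) * u := by
      have hx : (Nseq K a j : ℚ) / K = (Nseq K a' j : ℚ) / K + (((K : ℤ) ^ (e+1) * u : ℤ) : ℚ) := by
        have hcast : (Nseq K a j : ℚ) = (Nseq K a' j : ℚ) + ((K : ℚ) ^ (e + 1 + 1)) * (u : ℚ) := by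
          have h2 : ((Nseq K a j - Nseq K a' j : ℤ) : ℚ) = (((K : ℤ) ^ (e + 1 + 1) * u : ℤ) : ℚ) :=
            congrArg (fun z : ℤ => (z : ℚ)) hu
          push_cast at h2 ⊢
          linarith
        rw [hcast]
        push_cast
        field_simp
        ring
      rw [hx, Int.ceil_add_intCast]
    have hgoal : n + 1 - (j + 1) = e + 1 := by omega
    rw [hgoal]
    show (K : ℤ) ^ (e + 1) ∣ Nseq K a (j+1) - Nseq K a' (j+1)
    rw [Nseq, Nseq]
    set c' : ℤ := ⌈(Nseq K a' j : ℚ) / K⌉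
    have hNa : Nseq K a j = Nseq K a' j + (K : ℤ) ^ (e + 1 + 1) * u := by linarith [hu]
    rw [hceil, hNa]
    exact ⟨Nseq K a' j * u + (K:ℤ) * u * c' + (K:ℤ)^(e+2) * u^2, by ring⟩

-- PART 2

lemma ordEq_congr (K : ℕ) (hK : K ≠ 0) (a a' : ℤ) (n : ℕ)
    (h : (K : ℤ) ^ (n + 1) ∣ a - a') :
    ordEq ((a : ℚ) / K) n ↔ ordEq ((a' : ℚ) / K) n := by
  have key : ∀ j ≤ n, ((K : ℤ) ∣ Nseq K a j ↔ (K : ℤ) ∣ Nseq K a' j) := by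
    intro j hj
    have hd := Nseq_congr K hK a a' n h j hj
    have hK1 : (K : ℤ) ∣ (K : ℤ) ^ (n + 1 - j) := dvd_pow_self _ (by omega)
    have hdd : (K : ℤ) ∣ Nseq K a j - Nseq K a' j := hK1.trans hd
    constructor
    · intro hx; have := dvd_sub hx hdd; simpa using this
    · intro hx; have := dvd_add hx hdd; simpa using this
  rw [ordEq_iff K hK, ordEq_iff K hK]
  constructor
  · rintro ⟨h1, h2⟩
    exact ⟨(key n le_rfl).mp h1, fun j hj hc => h2 j hj ((key j (le_of_lt hj)).mpr hc)⟩
  · rintro ⟨h1, h2⟩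
    exact ⟨(key n le_rfl).mpr h1, fun j hj hc => h2 j hj ((key j (le_of_lt hj)).mp hc)⟩

lemma ordEq_zero (x : ℚ) : ordEq x 0 ↔ x.den = 1 := by
  simp [ordEq]

lemma ordEq_succ_s16 (x : ℚ) (n : ℕ) :
    ordEq x (n + 1) ↔ x.den ≠ 1 ∧ ordEq (chi x) n := by
  constructor
  · rintro ⟨h1, h2⟩
    refine ⟨h2 0 (Nat.succ_pos n), ?_, ?_⟩
    · rwa [← Function.iterate_succ_apply]
    · intro j hj
      have := h2 (j + 1) (by omega)
      rwa [Function.iterate_succ_apply] at this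
  · rintro ⟨h0, h1, h2⟩
    refine ⟨by rwa [Function.iterate_succ_apply], ?_⟩
    intro j hj
    cases j with
    | zero => simpa using h0
    | succ i =>
      rw [Function.iterate_succ_apply]
      exact h2 i (by omega)

lemma ceil_helper (K r m : ℕ) (h1 : 0 < r) (h2 : r < K) :
    ⌈((r + K * m : ℕ) : ℚ) / (K : ℚ)⌉ = (m : ℤ) + 1 := by
  have hK : 0 < K := lt_trans h1 h2
  have hKQ : (K : ℚ) ≠ 0 := by positivity
  have hx : ((r + K * m : ℕ) : ℚ) / (K : ℚ) = (r : ℚ) / K + (m : ℤ) := by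
    push_cast; field_simp
  rw [hx, Int.ceil_add_intCast]
  have : ⌈(r : ℚ) / K⌉ = 1 := by
    have hlt : (r:ℚ)/K ≤ 1 := by
      rw [div_le_one (by positivity)]
      exact_mod_cast h2.le
    have hpos : (0:ℚ) < (r:ℚ)/K := by positivity
    have hle : (1:ℤ) ≤ ⌈(r:ℚ)/K⌉ := Int.ceil_pos.mpr hpos
    have hge : ⌈(r:ℚ)/K⌉ ≤ 1 := Int.ceil_le.mpr (by exact_mod_cast hlt)
    omega
  omega

lemma A_eq (n M : ℕ) :
    A n M = ((Finset.range (M ^ (n+1))).filter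
      (fun a => Nat.Coprime a M ∧ ordEq ((a : ℚ) / M) n)).card := by
  rw [A]
  have e : {a : ℕ // a < M ^ (n + 1) ∧ Nat.Coprime a M ∧ ordEq ((a : ℚ) / M) n} ≃
      {a : ℕ // a ∈ (Finset.range (M ^ (n+1))).filter
        (fun a => Nat.Coprime a M ∧ ordEq ((a : ℚ) / M) n)} := by
    apply Equiv.subtypeEquivRight
    intro a
    simp [Finset.mem_filter, Finset.mem_range, and_assoc]
  rw [Nat.card_congr e, Nat.card_eq_fintype_card, Fintype.card_coe]

lemma card_filter_range_mul (K M : ℕ) (hK : 0 < K) (P : ℕ → Prop) :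
    ((Finset.range (K * M)).filter P).card
      = ∑ r ∈ Finset.range K, ((Finset.range M).filter (fun m => P (r + K * m))).card := by
  have hbij : ((Finset.range (K * M)).filter P).card
      = (((Finset.range K) ×ˢ (Finset.range M)).filter (fun q => P (q.1 + K * q.2))).card := by
    apply Finset.card_bij' (fun a _ => (a % K, a / K)) (fun q _ => q.1 + K * q.2)
    · intro a ha
      simp only [Finset.mem_filter, Finset.mem_range] at ha
      simp only [Finset.mem_filter, Finset.mem_product, Finset.mem_range]
      refine ⟨⟨Nat.mod_lt _ hK, ?_⟩, ?_⟩
      · exact Nat.div_lt_of_lt_mul (by linarith [ha.1])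
      · rw [Nat.mod_add_div]; exact ha.2
    · intro q hq
      simp only [Finset.mem_filter, Finset.mem_product, Finset.mem_range] at hq
      simp only [Finset.mem_filter, Finset.mem_range]
      constructor
      · calc q.1 + K * q.2 < K + K * q.2 := by omega
          _ = K * (q.2 + 1) := by ring
          _ ≤ K * M := Nat.mul_le_mul_left K (by omega)
      · exact hq.2
    · intro a ha; exact Nat.mod_add_div a K
    · intro q hq
      simp only [Finset.mem_filter, Finset.mem_product, Finset.mem_range] at hq
      ext
      · simp [Nat.add_mul_mod_self_left, Nat.mod_eq_of_lt hq.1.1]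
      · simp [Nat.add_mul_div_left _ _ hK, Nat.div_eq_of_lt hq.1.1]
  rw [hbij, Finset.card_filter, Finset.sum_product]
  congr 1
  ext r
  rw [Finset.card_filter]

lemma card_filter_Icc_shift (X : ℕ) (P : ℕ → Prop) :
    ((Finset.Icc 1 X).filter P).card
      = ((Finset.range X).filter (fun m => P (m + 1))).card := by
  refine Finset.card_bij' (fun c _ => c - 1) (fun m _ => m + 1) ?_ ?_ ?_ ?_
  · intro c hc
    simp only [Finset.mem_filter, Finset.mem_Icc] at hc
    simp only [Finset.mem_filter, Finset.mem_range]
    refine ⟨by omega, ?_⟩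
    have h : c - 1 + 1 = c := by omega
    rw [h]; exact hc.2
  · intro m hm
    simp only [Finset.mem_filter, Finset.mem_range] at hm
    simp only [Finset.mem_filter, Finset.mem_Icc]
    exact ⟨⟨by omega, by omega⟩, hm.2⟩
  · intro c hc
    simp only [Finset.mem_filter, Finset.mem_Icc] at hc
    show c - 1 + 1 = c
    omega
  · intro m _
    show m + 1 - 1 = m
    omega

lemma card_filter_Icc_periodic (Q t : ℕ) (hQ : 0 < Q) (P : ℕ → Prop)
    (hper : ∀ d, P (d + Q) ↔ P d) :
    ((Finset.Icc 1 (Q * t)).filter P).card = t * ((Finset.Icc 1 Q).filter P).card := by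
  have hiter : ∀ m d, P (d + Q * m) ↔ P d := by
    intro m
    induction m with
    | zero => simp
    | succ m ih =>
      intro d
      have : d + Q * (m + 1) = (d + Q * m) + Q := by ring
      rw [this, hper, ih]
  rw [card_filter_Icc_shift, card_filter_range_mul Q t hQ, card_filter_Icc_shift]
  have : ∀ q ∈ Finset.range Q,
      ((Finset.range t).filter (fun m => P (q + Q * m + 1))).card
        = if P (q + 1) then t else 0 := by
    intro q _
    have : ∀ m, P (q + Q * m + 1) ↔ P (q + 1) := by
      intro m
      have h1 : q + Q * m + 1 = (q + 1) + Q * m := by ring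
      rw [h1, hiter]
    by_cases h : P (q + 1)
    · rw [Finset.filter_true_of_mem (fun m _ => (this m).mpr h), Finset.card_range]
      simp [h]
    · rw [Finset.filter_false_of_mem (fun m _ => fun hc => h ((this m).mp hc))]
      simp [h]
  rw [Finset.sum_congr rfl this, Finset.card_filter, Finset.mul_sum]
  apply Finset.sum_congr rfl
  intro q _
  by_cases h : P (q + 1) <;> simp [h]

lemma card_filter_Icc_pow_eq_sum (p : ℕ) (hp : p.Prime) (k R : ℕ) (hkR : k ≤ R)
    (P : ℕ → Prop) (h0 : ∀ c, p ^ k ∣ c → ¬ P c) :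
    ((Finset.Icc 1 (p ^ R)).filter P).card
      = ∑ v ∈ Finset.range k,
        ((Finset.Icc 1 (p ^ (R - v))).filter (fun d => ¬ p ∣ d ∧ P (p ^ v * d))).card := by
  classical
  rw [← Finset.card_sigma]
  apply Finset.card_bij'
    (fun c _ => (⟨c.factorization p, c / p ^ (c.factorization p)⟩ :
      (v : ℕ) × ℕ))
    (fun q _ => p ^ q.1 * q.2)
  · -- forward membership
    intro c hc
    simp only [Finset.mem_filter, Finset.mem_Icc] at hc
    obtain ⟨⟨hc1, hc2⟩, hcP⟩ := hc
    have hc0 : c ≠ 0 := by omega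
    set v := c.factorization p with hv
    have hvk : v < k := by
      by_contra hvk
      push_neg at hvk
      have : p ^ k ∣ c := dvd_trans (pow_dvd_pow p hvk) (Nat.ordProj_dvd c p)
      exact h0 c this hcP
    have hvR : v ≤ R := le_trans (le_of_lt hvk) hkR
    simp only [Finset.mem_sigma, Finset.mem_range, Finset.mem_filter, Finset.mem_Icc]
    refine ⟨hvk, ⟨Nat.ordCompl_pos p hc0, ?_⟩, Nat.not_dvd_ordCompl hp hc0, ?_⟩
    · -- c / p^v ≤ p^(R-v)
      have h1 : c / p ^ v ≤ p ^ R / p ^ v := Nat.div_le_div_right hc2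
      rwa [Nat.pow_div hvR hp.pos] at h1
    · rw [Nat.ordProj_mul_ordCompl_eq_self]
      exact hcP
  · -- backward membership
    intro q hq
    simp only [Finset.mem_sigma, Finset.mem_range, Finset.mem_filter, Finset.mem_Icc] at hq
    obtain ⟨hv, ⟨hd1, hd2⟩, hpd, hP⟩ := hq
    simp only [Finset.mem_filter, Finset.mem_Icc]
    refine ⟨⟨Nat.one_le_iff_ne_zero.mpr (Nat.mul_ne_zero (pow_ne_zero _ hp.pos.ne') (by omega)), ?_⟩, hP⟩
    calc p ^ q.1 * q.2 ≤ p ^ q.1 * p ^ (R - q.1) := Nat.mul_le_mul_left _ hd2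
      _ = p ^ R := by rw [← pow_add]; congr 1; omega
  · -- left inverse
    intro c hc
    simp only [Finset.mem_filter, Finset.mem_Icc] at hc
    show p ^ (c.factorization p) * (c / p ^ (c.factorization p)) = c
    exact Nat.ordProj_mul_ordCompl_eq_self c p
  · -- right inverse
    intro q hq
    simp only [Finset.mem_sigma, Finset.mem_range, Finset.mem_filter, Finset.mem_Icc] at hq
    obtain ⟨hv, ⟨hd1, hd2⟩, hpd, hP⟩ := hq
    have hfact : (p ^ q.1 * q.2).factorization p = q.1 := by
      rw [Nat.factorization_mul (pow_ne_zero _ hp.pos.ne') (by omega)]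
      simp [Nat.Prime.factorization_pow, hp, Nat.factorization_eq_zero_of_not_dvd hpd]
    have h2 : p ^ q.1 * q.2 / p ^ ((p ^ q.1 * q.2).factorization p) = q.2 := by
      rw [hfact]
      exact Nat.mul_div_cancel_left q.2 (pow_pos hp.pos q.1)
    exact Sigma.ext hfact (heq_of_eq h2)


noncomputable def cnt (P : ℕ → Prop) (s : Finset ℕ) : ℕ :=
  (@Finset.filter ℕ P (fun a => Classical.propDecidable (P a)) s).card

lemma card_filter_eq_cnt (P : ℕ → Prop) [inst : DecidablePred P] (s : Finset ℕ) :
    (s.filter P).card = cnt P s := by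
  unfold cnt
  congr 1
  exact @Finset.filter_congr ℕ P P inst (fun a => Classical.propDecidable (P a)) s
    (fun _ _ => Iff.rfl)

lemma cnt_congr (P Q : ℕ → Prop) (s : Finset ℕ) (h : ∀ a ∈ s, P a ↔ Q a) :
    cnt P s = cnt Q s := by
  unfold cnt
  congr 1
  exact Finset.filter_congr h

lemma cnt_range_mul (K M : ℕ) (hK : 0 < K) (P : ℕ → Prop) :
    cnt P (Finset.range (K * M))
      = ∑ r ∈ Finset.range K, cnt (fun m => P (r + K * m)) (Finset.range M) := by
  unfold cnt
  rw [card_filter_range_mul K M hK P]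

lemma cnt_Icc_shift (X : ℕ) (P : ℕ → Prop) :
    cnt P (Finset.Icc 1 X) = cnt (fun m => P (m + 1)) (Finset.range X) := by
  unfold cnt
  rw [card_filter_Icc_shift X P, card_filter_eq_cnt]

lemma cnt_Icc_periodic (Q t : ℕ) (hQ : 0 < Q) (P : ℕ → Prop)
    (hper : ∀ d, P (d + Q) ↔ P d) :
    cnt P (Finset.Icc 1 (Q * t)) = t * cnt P (Finset.Icc 1 Q) := by
  unfold cnt
  rw [card_filter_Icc_periodic Q t hQ P hper]

lemma cnt_Icc_pow_eq_sum (p : ℕ) (hp : p.Prime) (k R : ℕ) (hkR : k ≤ R)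
    (P : ℕ → Prop) (h0 : ∀ c, p ^ k ∣ c → ¬ P c) :
    cnt P (Finset.Icc 1 (p ^ R))
      = ∑ v ∈ Finset.range k,
        cnt (fun d => ¬ p ∣ d ∧ P (p ^ v * d)) (Finset.Icc 1 (p ^ (R - v))) := by
  unfold cnt
  rw [card_filter_Icc_pow_eq_sum p hp k R hkR P h0]
  simp only [card_filter_eq_cnt]

lemma A_eq_cnt (n M : ℕ) :
    A n M = cnt (fun a => Nat.Coprime a M ∧ ordEq ((a : ℚ) / M) n)
      (Finset.range (M ^ (n+1))) := by
  rw [A_eq, card_filter_eq_cnt]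

lemma den_one_iff_nat (K : ℕ) (hK : K ≠ 0) (b : ℕ) :
    ((b : ℚ) / (K : ℚ)).den = 1 ↔ K ∣ b := by
  have h := den_one_iff K hK (b : ℤ)
  rw [Int.cast_natCast] at h
  rw [h, Int.natCast_dvd_natCast]

lemma coprime_add_mul (r K m : ℕ) : Nat.Coprime (r + K * m) K ↔ Nat.Coprime r K := by
  unfold Nat.Coprime
  rw [Nat.gcd_comm (r + K * m) K, Nat.gcd_add_mul_left_right K r m, Nat.gcd_comm]

lemma cnt_false (s : Finset ℕ) : cnt (fun _ => False) s = 0 := by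
  unfold cnt
  simp

lemma cnt_eq_singleton (b X : ℕ) (h : b < X) :
    cnt (fun m => m = b) (Finset.range X) = 1 := by
  rw [← card_filter_eq_cnt (fun m => m = b) (Finset.range X)]
  rw [Finset.filter_eq', if_pos (Finset.mem_range.mpr h), Finset.card_singleton]

lemma coprime_r_pos (K r : ℕ) (hK : 1 < K) (hco : Nat.Coprime r K) : 0 < r := by
  rcases Nat.eq_zero_or_pos r with h | h
  · exfalso
    rw [h] at hco
    have := Nat.coprime_zero_left K
    rw [this] at hco
    omega
  · exact h

lemma chi_val (K r m : ℕ) (hK : 1 < K) (hr0 : 0 < r) (hr : r < K) :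
    chi (((r + K * m : ℕ) : ℚ) / (K : ℚ))
      = (((r + K * m) * (m+1) : ℕ) : ℚ) / (K : ℚ) := by
  rw [chi, ceil_helper K r m hr0 hr]
  push_cast
  ring

lemma A_succ_eq (K n : ℕ) (hK : 1 < K) :
    A (n+1) K = ∑ r ∈ Finset.range K, (if Nat.Coprime r K then
      cnt (fun m => ordEq ((((r + K * m) * (m+1) : ℕ) : ℚ) / (K : ℚ)) n)
        (Finset.range (K ^ (n+1))) else 0) := by
  rw [A_eq_cnt]
  have hpow : K ^ (n + 1 + 1) = K * K ^ (n + 1) := by ring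
  rw [hpow, cnt_range_mul K (K ^ (n+1)) (by omega)]
  apply Finset.sum_congr rfl
  intro r hr
  rw [Finset.mem_range] at hr
  by_cases hco : Nat.Coprime r K
  · rw [if_pos hco]
    apply cnt_congr
    intro m _
    have hr0 := coprime_r_pos K r hK hco
    have hchi := chi_val K r m hK hr0 hr
    constructor
    · rintro ⟨_, hord⟩
      rw [ordEq_succ_s16, hchi] at hord
      exact hord.2
    · intro hord
      refine ⟨(coprime_add_mul r K m).mpr hco, ?_⟩
      rw [ordEq_succ_s16, hchi]
      refine ⟨?_, hord⟩
      rw [ne_eq, den_one_iff_nat K (by omega)]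
      intro hdvd
      have hdvd2 : K ∣ K * m + r := by rwa [add_comm] at hdvd
      have h3 : K ∣ r := (Nat.dvd_add_right ⟨m, rfl⟩).mp hdvd2
      have h4 : K ∣ Nat.gcd r K := Nat.dvd_gcd h3 dvd_rfl
      rw [Nat.Coprime] at hco
      rw [hco] at h4
      have := Nat.le_of_dvd one_pos h4
      omega
  · rw [if_neg hco]
    have h : cnt (fun m => Nat.Coprime (r + K * m) K ∧
          ordEq (((r + K * m : ℕ) : ℚ) / (K : ℚ)) (n+1)) (Finset.range (K ^ (n+1)))
        = cnt (fun _ => False) (Finset.range (K ^ (n+1))) := by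
      apply cnt_congr
      intro m _
      simp only [iff_false]
      rintro ⟨hcop, -⟩
      exact hco ((coprime_add_mul r K m).mp hcop)
    rw [h, cnt_false]

lemma A_one (K : ℕ) (hK : 1 < K) : A 1 K = K.totient := by
  rw [A_succ_eq K 0 hK]
  have step : ∀ r ∈ Finset.range K, (if Nat.Coprime r K then
      cnt (fun m => ordEq ((((r + K * m) * (m+1) : ℕ) : ℚ) / (K : ℚ)) 0)
        (Finset.range (K ^ (0+1))) else 0)
      = if Nat.Coprime r K then 1 else 0 := by
    intro r hr
    rw [Finset.mem_range] at hr
    by_cases hco : Nat.Coprime r K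
    · rw [if_pos hco, if_pos hco]
      have h1 : cnt (fun m => ordEq ((((r + K * m) * (m+1) : ℕ) : ℚ) / (K : ℚ)) 0)
          (Finset.range (K ^ (0+1))) = cnt (fun m => m = K - 1) (Finset.range (K ^ (0+1))) := by
        apply cnt_congr
        intro m hm
        rw [Finset.mem_range, pow_one] at hm
        rw [ordEq_zero, den_one_iff_nat K (by omega)]
        constructor
        · intro h2
          have h3 : K ∣ m + 1 := by
            have hco2 : Nat.Coprime K (r + K * m) :=
              ((coprime_add_mul r K m).mpr hco).symm
            exact hco2.dvd_of_dvd_mul_left h2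
          have h5 : m + 1 = K := Nat.eq_of_dvd_of_lt_two_mul (by omega) h3 (by omega)
          omega
        · intro h
          subst h
          have h1 : K - 1 + 1 = K := by omega
          rw [h1]
          exact dvd_mul_left K _
      rw [h1, cnt_eq_singleton _ _ (by rw [pow_one]; omega)]
    · rw [if_neg hco, if_neg hco]
  rw [Finset.sum_congr rfl step]
  have htot : K.totient = ((Finset.range K).filter K.Coprime).card := rfl
  rw [htot, Finset.card_filter]
  apply Finset.sum_congr rfl
  intro r _
  by_cases h : Nat.Coprime r K
  · rw [if_pos h, if_pos (Nat.coprime_comm.mp h)]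
  · rw [if_neg h, if_neg (fun hc => h (Nat.coprime_comm.mp hc))]

lemma ordEq_congr_nat (K : ℕ) (hK : K ≠ 0) (a a' : ℕ) (n : ℕ)
    (h : ((K : ℤ)) ^ (n + 1) ∣ (a : ℤ) - a') :
    (ordEq ((a : ℚ) / K) n ↔ ordEq ((a' : ℚ) / K) n) := by
  have h2 := ordEq_congr K hK (a : ℤ) (a' : ℤ) n h
  rw [Int.cast_natCast, Int.cast_natCast] at h2
  exact h2

lemma cnt_fiber (p : ℕ) (hp : p.Prime) (k' n r K pv : ℕ) (hk' : 1 ≤ k')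
    (hr : ¬ p ∣ r) (hKp : p ∣ K) (hpv : 1 ≤ pv) :
    cnt (fun d => ¬ p ∣ d ∧
        ordEq ((((r + K * (pv * d - 1)) * d : ℕ) : ℚ) / ((p ^ k' : ℕ) : ℚ)) n)
      (Finset.Icc 1 (p ^ (k' * (n+1))))
      = A n (p ^ k') := by
  have hppos := hp.pos
  set Qm := p ^ (k' * (n+1)) with hQm
  have hQmpos : 0 < Qm := pow_pos hppos _
  have hpQm : p ∣ Qm := dvd_pow_self p (Nat.mul_ne_zero (by omega) (by omega))
  set K' := p ^ k' with hK'
  have hK'pos : 0 < K' := pow_pos hppos _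
  rw [A_eq_cnt]
  have hpow : K' ^ (n+1) = Qm := by rw [hK', hQm, ← pow_mul]
  rw [hpow]
  set g : ℕ → ℕ := fun d => (r + K * (pv * d - 1)) * d with hg
  set F : ℕ → ℤ := fun d => ((r:ℤ) + K * (pv * d - 1)) * d with hF
  have hgF : ∀ d : ℕ, 1 ≤ d → (g d : ℤ) = F d := by
    intro d hd
    have h1 : 1 ≤ pv * d := Nat.one_le_iff_ne_zero.mpr (Nat.mul_ne_zero (by omega) (by omega))
    simp only [hg, hF]
    push_cast [Nat.cast_sub h1]
    ring
  have hdiff : ∀ d₁ d₂ : ℕ, F d₁ - F d₂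
      = ((d₁:ℤ) - d₂) * ((r:ℤ) - K + K * pv * (d₁ + d₂)) := by
    intro d₁ d₂
    simp only [hF]
    ring
  have hw : ∀ d₁ d₂ : ℕ, ¬ (p:ℤ) ∣ ((r:ℤ) - K + K * pv * (d₁ + d₂)) := by
    intro d₁ d₂ hdvd
    have hpK : (p:ℤ) ∣ (K:ℤ) := Int.natCast_dvd_natCast.mpr hKp
    have h2 : (p:ℤ) ∣ (K:ℤ) * pv * (d₁ + d₂) - K :=
      dvd_sub ((hpK.mul_right _).mul_right _) hpK
    have h3 := dvd_sub hdvd h2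
    have h4 : (r:ℤ) - K + K * pv * (d₁ + d₂) - ((K:ℤ) * pv * (d₁ + d₂) - K) = (r:ℤ) := by ring
    rw [h4] at h3
    exact hr (Int.natCast_dvd_natCast.mp h3)
  have hcastpow : ((K' : ℕ) : ℤ) ^ (n+1) = (Qm : ℤ) := by
    rw [hK', hQm]
    push_cast
    rw [← pow_mul]
  have hmodd : ∀ x : ℕ, ((Qm:ℤ)) ∣ ((x % Qm : ℕ) : ℤ) - (x : ℤ) := by
    intro x
    have h1 : Qm * (x / Qm) + x % Qm = x := Nat.div_add_mod x Qm
    refine ⟨-((x / Qm : ℕ) : ℤ), ?_⟩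
    push_cast at h1 ⊢
    linarith
  have htrans : ∀ d : ℕ, ordEq (((g d % Qm : ℕ) : ℚ) / K') n ↔ ordEq (((g d : ℕ) : ℚ) / K') n := by
    intro d
    apply ordEq_congr_nat K' (by omega)
    rw [hcastpow]
    exact hmodd (g d)
  have hgunit : ∀ d : ℕ, ¬ p ∣ d → ¬ p ∣ g d := by
    intro d hpd hcon
    rcases (Nat.Prime.dvd_mul hp).mp hcon with h | h
    · have hKt : p ∣ K * (pv * d - 1) := hKp.mul_right _
      have h2 : p ∣ K * (pv * d - 1) + r := by rwa [add_comm] at h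
      exact hr ((Nat.dvd_add_right hKt).mp h2)
    · exact hpd h
  have hinjcore : ∀ d₁ d₂ : ℕ, 1 ≤ d₁ → d₁ ≤ Qm → 1 ≤ d₂ → d₂ ≤ Qm →
      g d₁ % Qm = g d₂ % Qm → d₁ = d₂ := by
    intro d₁ d₂ h11 h12 h21 h22 heq
    have e1 := hmodd (g d₁)
    have e2 := hmodd (g d₂)
    rw [heq] at e1
    have hmod : (Qm:ℤ) ∣ (g d₁ : ℤ) - (g d₂ : ℤ) := by
      have := dvd_sub e1 e2
      have h4 : ((g d₂ % Qm : ℕ) : ℤ) - (g d₁:ℤ) - (((g d₂ % Qm : ℕ) : ℤ) - (g d₂:ℤ))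
          = -((g d₁ : ℤ) - g d₂) := by ring
      rw [h4] at this
      exact (dvd_neg.mp this)
    rw [hgF d₁ h11, hgF d₂ h21, hdiff d₁ d₂] at hmod
    have hpint : Prime (p:ℤ) := Int.prime_iff_natAbs_prime.mpr (by simpa using hp)
    have hQint : (Qm:ℤ) = (p:ℤ) ^ (k' * (n+1)) := by rw [hQm]; push_cast; ring
    rw [hQint] at hmod
    have hdd := hpint.pow_dvd_of_dvd_mul_right _ (hw d₁ d₂) hmod
    rw [← hQint] at hdd
    have habs : (d₁:ℤ) - d₂ = 0 := by
      apply Int.eq_zero_of_abs_lt_dvd hdd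
      rw [abs_sub_lt_iff]
      constructor <;> omega
    omega
  unfold cnt
  apply Finset.card_bij (fun d _ => g d % Qm)
  · -- maps into target
    intro d hd
    simp only [Finset.mem_filter, Finset.mem_Icc] at hd
    obtain ⟨⟨hd1, hd2⟩, hpd, hord⟩ := hd
    simp only [Finset.mem_filter, Finset.mem_range]
    refine ⟨Nat.mod_lt _ hQmpos, ?_, (htrans d).mpr hord⟩
    have hnd : ¬ p ∣ g d % Qm := by
      rw [Nat.dvd_mod_iff hpQm]
      exact hgunit d hpd
    exact Nat.Coprime.pow_right k' ((hp.coprime_iff_not_dvd.mpr hnd).symm)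
  · -- injective
    intro d₁ hd₁ d₂ hd₂ heq
    simp only [Finset.mem_filter, Finset.mem_Icc] at hd₁ hd₂
    exact hinjcore d₁ d₂ hd₁.1.1 hd₁.1.2 hd₂.1.1 hd₂.1.2 heq
  · -- surjective
    intro b hb
    simp only [Finset.mem_filter, Finset.mem_range] at hb
    obtain ⟨hblt, hbco, hbord⟩ := hb
    have hbnd : ¬ p ∣ b := by
      intro hdvd
      have h1 : p ∣ Nat.gcd b K' := Nat.dvd_gcd hdvd (dvd_pow_self p (by omega))
      rw [hbco] at h1
      have := Nat.le_of_dvd one_pos h1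
      have := hp.one_lt
      omega
    -- unit sets over Icc and range coincide
    have hU : (Finset.Icc 1 Qm).filter (fun d => ¬ p ∣ d)
        = (Finset.range Qm).filter (fun d => ¬ p ∣ d) := by
      ext x
      simp only [Finset.mem_filter, Finset.mem_Icc, Finset.mem_range]
      constructor
      · rintro ⟨⟨h1, h2⟩, h3⟩
        refine ⟨?_, h3⟩
        rcases eq_or_lt_of_le h2 with rfl | h
        · exact absurd hpQm h3
        · exact h
      · rintro ⟨h1, h3⟩
        refine ⟨⟨?_, by omega⟩, h3⟩
        rcases Nat.eq_zero_or_pos x with rfl | h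
        · exact absurd (dvd_zero p) h3
        · omega
    have hsurj := Finset.surj_on_of_inj_on_of_card_le
      (s := (Finset.Icc 1 Qm).filter (fun d => ¬ p ∣ d))
      (t := (Finset.range Qm).filter (fun d => ¬ p ∣ d))
      (fun d _ => g d % Qm) ?hmaps ?hinj ?hcard b ?hbmem
    case hmaps =>
      intro d hd
      simp only [Finset.mem_filter, Finset.mem_Icc] at hd
      simp only [Finset.mem_filter, Finset.mem_range]
      refine ⟨Nat.mod_lt _ hQmpos, ?_⟩
      rw [Nat.dvd_mod_iff hpQm]
      exact hgunit d hd.2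
    case hinj =>
      intro d₁ d₂ hd₁ hd₂ heq
      simp only [Finset.mem_filter, Finset.mem_Icc] at hd₁ hd₂
      exact hinjcore d₁ d₂ hd₁.1.1 hd₁.1.2 hd₂.1.1 hd₂.1.2 heq
    case hcard => exact le_of_eq (congrArg Finset.card hU.symm)
    case hbmem =>
      simp only [Finset.mem_filter, Finset.mem_range]
      exact ⟨hblt, hbnd⟩
    obtain ⟨d, hd, hbd⟩ := hsurj
    simp only [Finset.mem_filter, Finset.mem_Icc] at hd
    refine ⟨d, ?_, hbd.symm⟩
    simp only [Finset.mem_filter, Finset.mem_Icc]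
    refine ⟨⟨hd.1.1, hd.1.2⟩, hd.2, ?_⟩
    have hbeq : g d % Qm = b := hbd.symm
    exact (htrans d).mp (by rw [hbeq]; exact hbord)

lemma A_rec (p : ℕ) (hp : p.Prime) (k n : ℕ) (hk : 1 ≤ k) (hn : 1 ≤ n) :
    A (n+1) (p^k) = (p^k).totient * ∑ v ∈ Finset.range k, A n (p^(k-v)) * p^(v*n) := by
  set K := p ^ k with hKdef
  have hK1 : 1 < K := Nat.one_lt_pow (by omega) hp.one_lt
  have hKdvd : p ∣ K := by rw [hKdef]; exact dvd_pow_self p (by omega)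
  rw [A_succ_eq K n hK1]
  have key : ∀ r, r < K → Nat.Coprime r K →
      cnt (fun m => ordEq ((((r + K * m) * (m+1) : ℕ) : ℚ) / (K : ℚ)) n)
        (Finset.range (K ^ (n+1)))
        = ∑ v ∈ Finset.range k, A n (p^(k-v)) * p^(v*n) := by
    intro r hrK hco
    have hpr : ¬ p ∣ r := by
      intro hdvd
      have h1 : p ∣ Nat.gcd r K := Nat.dvd_gcd hdvd hKdvd
      rw [hco] at h1
      have := Nat.le_of_dvd one_pos h1
      have := hp.one_lt
      omega
    have hshift : cnt (fun m => ordEq ((((r + K * m) * (m+1) : ℕ) : ℚ) / (K : ℚ)) n)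
          (Finset.range (K ^ (n+1)))
        = cnt (fun c => ordEq ((((r + K * (c-1)) * c : ℕ) : ℚ) / (K : ℚ)) n)
          (Finset.Icc 1 (K ^ (n+1))) := by
      rw [cnt_Icc_shift]
      apply cnt_congr
      intro m _
      simp only [Nat.add_sub_cancel]
    rw [hshift]
    have hKpow : K ^ (n+1) = p ^ (k*(n+1)) := by rw [hKdef, ← pow_mul]
    rw [hKpow]
    rw [cnt_Icc_pow_eq_sum p hp k (k*(n+1)) (Nat.le_mul_of_pos_right k (by omega)) _ ?h0]
    case h0 =>
      intro c hdvd hPc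
      have hden := hPc.2 0 (by omega)
      simp only [Function.iterate_zero, id_eq] at hden
      apply hden
      rw [den_one_iff_nat K (by omega)]
      have hKc : K ∣ c := by rw [hKdef]; exact hdvd
      exact hKc.mul_left _
    apply Finset.sum_congr rfl
    intro v hv
    rw [Finset.mem_range] at hv
    have hk'1 : 1 ≤ k - v := by omega
    -- rewrite the predicate to reduced denominator p^(k-v)
    have hrw : ∀ d : ℕ, 1 ≤ d →
        ((((r + K * (p^v * d - 1)) * (p^v * d) : ℕ) : ℚ) / (K : ℚ)
          = (((r + K * (p^v * d - 1)) * d : ℕ) : ℚ) / ((p ^ (k-v) : ℕ) : ℚ)) := by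
      intro d hd
      have hKsplit : (K:ℚ) = (p:ℚ)^(k-v) * (p:ℚ)^v := by
        rw [hKdef]
        push_cast
        rw [← pow_add]
        congr 1
        omega
      have hp0 : (p:ℚ) ≠ 0 := by
        have := hp.pos
        positivity
      push_cast
      rw [hKsplit]
      field_simp
    have hpred : cnt (fun d => ¬ p ∣ d ∧
          ordEq ((((r + K * ((p^v * d) - 1)) * (p^v * d) : ℕ) : ℚ) / (K : ℚ)) n)
          (Finset.Icc 1 (p ^ (k*(n+1) - v)))
        = cnt (fun d => ¬ p ∣ d ∧
          ordEq ((((r + K * (p^v * d - 1)) * d : ℕ) : ℚ) / ((p ^ (k-v) : ℕ) : ℚ)) n)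
          (Finset.Icc 1 (p ^ (k*(n+1) - v))) := by
      apply cnt_congr
      intro d hd
      rw [Finset.mem_Icc] at hd
      rw [hrw d hd.1]
    rw [hpred]
    have hexp : (k-v)*(n+1) + v*n = k*(n+1) - v := by
      have h3 : (k-v)*(n+1) = k*(n+1) - v*(n+1) := Nat.sub_mul k v (n+1)
      have h1 : v*(n+1) ≤ k*(n+1) := Nat.mul_le_mul_right _ (by omega)
      have h4 : v*(n+1) = v*n + v := by ring
      omega
    have hsplit : p ^ (k*(n+1) - v) = p ^ ((k-v)*(n+1)) * p ^ (v*n) := by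
      rw [← pow_add, hexp]
    rw [hsplit]
    rw [cnt_Icc_periodic _ _ (pow_pos hp.pos _) _ ?hper]
    case hper =>
      intro d
      set Qm := p ^ ((k-v)*(n+1)) with hQmdef
      have hpQm : p ∣ Qm := by
        rw [hQmdef]
        exact dvd_pow_self p (Nat.mul_ne_zero (by omega) (by omega))
      by_cases hpd : p ∣ d
      · have h1 : p ∣ d + Qm := dvd_add hpd hpQm
        simp [hpd, h1]
      · have hd1 : 1 ≤ d := by
          rcases Nat.eq_zero_or_pos d with rfl | h
          · exact absurd (dvd_zero p) hpd
          · omega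
        have hiff1 : p ∣ d + Qm ↔ p ∣ d := by
          rw [add_comm]
          exact Nat.dvd_add_right hpQm
        have hgF : ∀ e : ℕ, 1 ≤ e →
            (((r + K * (p^v * e - 1)) * e : ℕ) : ℤ)
              = ((r:ℤ) + K * ((p:ℤ)^v * e - 1)) * e := by
          intro e he
          have h1 : 1 ≤ p^v * e :=
            Nat.one_le_iff_ne_zero.mpr (Nat.mul_ne_zero (pow_ne_zero _ (by have := hp.pos; omega)) (by omega))
          push_cast [Nat.cast_sub h1]
          ring
        have hdvd2 : ((p ^ (k-v) : ℕ) : ℤ) ^ (n+1) ∣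
            (((r + K * (p^v * (d + Qm) - 1)) * (d + Qm) : ℕ) : ℤ)
              - (((r + K * (p^v * d - 1)) * d : ℕ) : ℤ) := by
          have hcast : ((p ^ (k-v) : ℕ) : ℤ) ^ (n+1) = (Qm : ℤ) := by
            rw [hQmdef]
            push_cast
            rw [← pow_mul]
          rw [hcast, hgF (d + Qm) (by omega), hgF d hd1]
          refine ⟨(r:ℤ) - K + K * (p:ℤ)^v * (2*d + Qm), ?_⟩
          push_cast
          ring
        have hiff2 := ordEq_congr_nat (p^(k-v)) (by have := hp.pos; positivity) _ _ n hdvd2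
        rw [hiff1, hiff2]
    rw [cnt_fiber p hp (k-v) n r K (p^v) hk'1 hpr hKdvd
      (Nat.one_le_iff_ne_zero.mpr (pow_ne_zero _ (by have := hp.pos; omega)))]
    ring
  have step : ∀ r ∈ Finset.range K, (if Nat.Coprime r K then
      cnt (fun m => ordEq ((((r + K * m) * (m+1) : ℕ) : ℚ) / (K : ℚ)) n)
        (Finset.range (K ^ (n+1))) else 0)
      = (if Nat.Coprime r K then 1 else 0) * ∑ v ∈ Finset.range k, A n (p^(k-v)) * p^(v*n) := by
    intro r hr
    rw [Finset.mem_range] at hr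
    by_cases hco : Nat.Coprime r K
    · rw [if_pos hco, if_pos hco, one_mul]
      exact key r hr hco
    · rw [if_neg hco, if_neg hco, zero_mul]
  rw [Finset.sum_congr rfl step, ← Finset.sum_mul]
  congr 1
  have htot : K.totient = ((Finset.range K).filter K.Coprime).card := rfl
  rw [htot, Finset.card_filter]
  apply Finset.sum_congr rfl
  intro r _
  by_cases h : Nat.Coprime r K
  · rw [if_pos h, if_pos (Nat.coprime_comm.mp h)]
  · rw [if_neg h, if_neg (fun hc => h (Nat.coprime_comm.mp hc))]

theorem A_prime_pow (p : ℕ) (hp : p.Prime) (k n : ℕ) (hk : 1 ≤ k) (hn : 1 ≤ n) :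
    A n (p ^ k) = Nat.choose (n + k - 2) (n - 1) * Nat.totient (p ^ k) ^ n := by
  induction n, hn using Nat.le_induction generalizing k with
  | base =>
    rw [A_one _ (Nat.one_lt_pow (by omega) hp.one_lt)]
    have h1 : 1 + k - 2 = k - 1 := by omega
    rw [h1]
    simp
  | succ n hn ih =>
    rw [A_rec p hp k n hk hn]
    have hphi : ∀ j, 1 ≤ j → (p^j).totient = p^(j-1) * (p-1) := by
      intro j hj
      rw [Nat.totient_prime_pow hp (by omega)]
    have hsum : ∀ v ∈ Finset.range k, A n (p^(k-v)) * p^(v*n)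
        = Nat.choose (n + (k-v) - 2) (n-1) * (p^k).totient ^ n := by
      intro v hv
      rw [Finset.mem_range] at hv
      rw [ih (k-v) (by omega), mul_assoc]
      congr 1
      rw [hphi (k-v) (by omega), hphi k hk]
      rw [mul_pow, mul_pow]
      rw [mul_right_comm]
      congr 1
      rw [← pow_mul, ← pow_mul, ← pow_add]
      congr 1
      have h3 : (k-v-1)*n = (k-1)*n - v*n := by
        have : k - v - 1 = (k-1) - v := by omega
        rw [this, Nat.sub_mul]
      have h1 : v*n ≤ (k-1)*n := Nat.mul_le_mul_right _ (by omega)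
      omega
    rw [Finset.sum_congr rfl hsum, ← Finset.sum_mul]
    have hhs : ∑ v ∈ Finset.range k, Nat.choose (n + (k-v) - 2) (n-1)
        = Nat.choose ((n+1) + k - 2) ((n+1) - 1) := by
      have hterm : ∀ v ∈ Finset.range k,
          Nat.choose (n + (k-v) - 2) (n-1) = (fun j => Nat.choose ((n-1)+j) (n-1)) (k - 1 - v) := by
        intro v hv
        rw [Finset.mem_range] at hv
        congr 1
        omega
      rw [Finset.sum_congr rfl hterm]
      rw [Finset.sum_range_reflect (fun j => Nat.choose ((n-1)+j) (n-1)) k]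
      -- now ∑ j in range k, choose (n-1+j) (n-1) = choose (n-1+k) n
      have hicc : ∑ m ∈ Finset.Icc (n-1) ((n-1)+k-1), Nat.choose m (n-1)
          = ∑ j ∈ Finset.range k, Nat.choose ((n-1)+j) (n-1) := by
        have h5 : (n-1) + k - 1 + 1 = (n-1) + k := by omega
        rw [← Finset.Ico_add_one_right_eq_Icc, h5, Finset.sum_Ico_eq_sum_range]
        apply Finset.sum_congr
        · congr 1
          omega
        · intro j _
          rfl
      rw [← hicc, Nat.sum_Icc_choose]
      congr 1 <;> omega

    rw [hhs]
    have hpow : (p^k).totient ^ (n+1) = (p^k).totient * (p^k).totient ^ n := by ring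
    rw [hpow]
    ring
end

section
/- For every positive integer M, ∑_{n=0}^∞ A(n, M)/φ(M^{n+1}) = 1, where φ is Euler's totient function. In other words, the probability that a/M with gcd(a,M)=1 has finite order under χ is 1. -/
namespace CP

/-- ceiling of b/m as a natural number -/
def cB (b m : ℕ) : ℕ := b / m + 1
def rB (b m : ℕ) : ℕ := m - b % m
def gB (b m : ℕ) : ℕ := Nat.gcd (cB b m) m
def dB (b m : ℕ) : ℕ := m / gB b m
def uB (b m : ℕ) : ℕ := cB b m / gB b m
def nB (b m : ℕ) : ℕ := b * uB b m

theorem ceil_nat_div (b m : ℕ) (h : ¬ (m ∣ b)) (hm : 0 < m) : ⌈(b:ℚ)/m⌉ = ((b/m + 1 : ℕ) : ℤ) := by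
  have h0 : b % m ≠ 0 := fun hc => h (Nat.dvd_of_mod_eq_zero hc)
  have hdm := Nat.div_add_mod b m
  have hmod := Nat.mod_lt b hm
  have hm' : (0:ℚ) < m := by exact_mod_cast hm
  rw [Int.ceil_eq_iff]
  have h1 : m * (b/m) < b := by omega
  have h2 : b ≤ m * (b/m) + m := by omega
  constructor
  · push_cast
    rw [add_sub_cancel_right, lt_div_iff₀ hm']
    calc ((b/m : ℕ):ℚ) * m = (m * (b/m) : ℕ) := by push_cast; ring
    _ < b := by exact_mod_cast h1
  · push_cast
    rw [div_le_iff₀ hm']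
    calc (b:ℚ) = ((b:ℕ):ℚ) := by norm_num
    _ ≤ ((m * (b/m) + m : ℕ) : ℚ) := by exact_mod_cast h2
    _ = ((b/m:ℕ) + 1) * m := by push_cast; ring

theorem den_num_div (a m : ℕ) (hm : 0 < m) (h : a.Coprime m) :
    ((a:ℚ)/(m:ℚ)).den = m ∧ ((a:ℚ)/(m:ℚ)).num = a := by
  have hm' : (0:ℤ) < m := by exact_mod_cast hm
  have hco : Nat.Coprime (a:ℤ).natAbs (m:ℤ).natAbs := by simpa using h
  constructor
  · have := Rat.den_div_eq_of_coprime hm' hco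
    have h2 : (((a:ℤ):ℚ) / ((m:ℤ):ℚ)) = (a:ℚ)/(m:ℚ) := by push_cast; ring
    rw [h2] at this
    exact_mod_cast this
  · have := Rat.num_div_eq_of_coprime hm' hco
    have h2 : (((a:ℤ):ℚ) / ((m:ℤ):ℚ)) = (a:ℚ)/(m:ℚ) := by push_cast; ring
    rw [h2] at this
    exact_mod_cast this

section Step
variable {b m : ℕ} (hm : 2 ≤ m) (hb : b.Coprime m)

include hm hb

theorem not_dvd : ¬ (m ∣ b) := by
  intro hd
  have h1 : m ∣ Nat.gcd b m := Nat.dvd_gcd hd dvd_rfl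
  rw [hb] at h1
  have := Nat.le_of_dvd one_pos h1
  omega

theorem bmod_ne : b % m ≠ 0 := fun hc => not_dvd hm hb (Nat.dvd_of_mod_eq_zero hc)

theorem gB_pos : 0 < gB b m := Nat.gcd_pos_of_pos_right _ (by omega)

theorem m_eq : m = gB b m * dB b m :=
  (Nat.mul_div_cancel' (Nat.gcd_dvd_right _ _)).symm

theorem c_eq : cB b m = gB b m * uB b m :=
  (Nat.mul_div_cancel' (Nat.gcd_dvd_left _ _)).symm

theorem dB_pos : 0 < dB b m :=
  Nat.div_pos (Nat.le_of_dvd (by omega) (Nat.gcd_dvd_right _ _)) (gB_pos hm hb)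

theorem dB_dvd : dB b m ∣ m := Nat.div_dvd_of_dvd (Nat.gcd_dvd_right _ _)

theorem cop_ud : (uB b m).Coprime (dB b m) :=
  Nat.coprime_div_gcd_div_gcd (gB_pos hm hb)

theorem cop_bd : b.Coprime (dB b m) := hb.coprime_dvd_right (dB_dvd hm hb)

theorem cop_nd : (nB b m).Coprime (dB b m) := Nat.Coprime.mul (cop_bd hm hb) (cop_ud hm hb)

theorem cm_eq : cB b m * m = b + rB b m := by
  have hdm := Nat.div_add_mod b m
  have hmod : b % m < m := Nat.mod_lt b (by omega)
  unfold cB rB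
  have : (b/m + 1) * m = m * (b/m) + m := by ring
  omega

theorem rB_cop : (rB b m).Coprime m := by
  have h1 : b % m < m := Nat.mod_lt b (by omega)
  have hco : (b % m).Coprime m := by
    have h2 : Nat.gcd (b % m) m = Nat.gcd b m :=
      (Nat.gcd_rec m b).symm.trans (Nat.gcd_comm m b)
    unfold Nat.Coprime
    rw [h2]; exact hb
  have hs : b % m ≤ m := le_of_lt h1
  unfold rB
  generalize hsv : b % m = s at *
  have key : m = s + (m - s) := by omega
  rw [key, Nat.add_sub_cancel_left, Nat.coprime_add_self_right]
  have h3 := (Nat.coprime_sub_self_left hs).mpr hco.symm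
  rw [key] at h3
  rw [Nat.add_sub_cancel_left] at h3
  exact h3

theorem chi_eq : chi ((b:ℚ)/m) = ((nB b m : ℕ):ℚ) / ((dB b m : ℕ):ℚ) := by
  have hceil := ceil_nat_div b m (not_dvd hm hb) (by omega)
  unfold chi
  rw [hceil]
  have hg : (gB b m : ℚ) ≠ 0 := by exact_mod_cast (gB_pos hm hb).ne'
  have hd : (dB b m : ℚ) ≠ 0 := by exact_mod_cast (dB_pos hm hb).ne'
  have hm0 : (m:ℚ) ≠ 0 := by exact_mod_cast (by omega : m ≠ 0)
  have hcc : (((b/m + 1 : ℕ) : ℤ) : ℚ) = ((cB b m : ℕ) : ℚ) := by norm_cast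
  rw [hcc]
  have h1 : (cB b m : ℚ) = (gB b m : ℚ) * (uB b m : ℚ) := by
    exact_mod_cast congrArg (Nat.cast (R := ℚ)) (c_eq hm hb)
  have h2 : (m : ℚ) = (gB b m : ℚ) * (dB b m : ℚ) := by
    exact_mod_cast congrArg (Nat.cast (R := ℚ)) (m_eq hm hb)
  rw [h1]
  unfold nB
  push_cast
  rw [h2]
  field_simp

theorem chi_den : (chi ((b:ℚ)/m)).den = dB b m := by
  rw [chi_eq hm hb]
  exact (den_num_div _ _ (dB_pos hm hb) (cop_nd hm hb)).1

theorem chi_num : (chi ((b:ℚ)/m)).num = nB b m := by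
  rw [chi_eq hm hb]
  exact (den_num_div _ _ (dB_pos hm hb) (cop_nd hm hb)).2

end Step

theorem chi_int {x : ℚ} (h : x.den = 1) : (chi x).den = 1 := by
  lift x to ℤ using h with n
  unfold chi
  rw [show ((n:ℚ) * (⌈(n:ℚ)⌉ : ℚ)) = ((n * ⌈(n:ℚ)⌉ : ℤ) : ℚ) by push_cast; ring]
  exact Rat.den_intCast _

theorem chi_iter_int {x : ℚ} (h : x.den = 1) (j : ℕ) : (chi^[j] x).den = 1 := by
  induction j generalizing x with
  | zero => simpa using h
  | succ k ih =>
    rw [Function.iterate_succ_apply]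
    exact ih (chi_int h)

theorem den_eq_one_div (a m : ℕ) (hm : 0 < m) (ha : a.Coprime m) (hm1 : m = 1) :
    ((a:ℚ)/m).den = 1 := by
  subst hm1; simpa using (den_num_div a 1 hm ha).1


theorem level0 (m a a' K : ℕ) (hm : 0 < m) (hca : a.Coprime m) (hca' : a'.Coprime m)
    (hmod : a ≡ a' [MOD m^K]) :
    ((a:ℚ)/m).den = ((a':ℚ)/m).den ∧
      ((a:ℚ)/m).num ≡ ((a':ℚ)/m).num [ZMOD (((a:ℚ)/m).den : ℤ)^K] := by
  refine ⟨?_, ?_⟩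
  · rw [(den_num_div a m hm hca).1, (den_num_div a' m hm hca').1]
  · rw [(den_num_div a m hm hca).2, (den_num_div a' m hm hca').2,
      (den_num_div a m hm hca).1]
    have h1 : ((a:ℤ)) ≡ (a':ℤ) [ZMOD ((m^K : ℕ) : ℤ)] := by
      rw [Int.natCast_modEq_iff]; exact hmod
    have h2 : ((m^K : ℕ) : ℤ) = (m:ℤ)^K := by push_cast; ring
    rwa [h2] at h1

theorem congr_main : ∀ (k : ℕ), ∀ (m a a' : ℕ), 0 < m → a.Coprime m → a'.Coprime m →
    a ≡ a' [MOD m^(k+1)] →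
    ∀ j ≤ k, (chi^[j] ((a:ℚ)/m)).den = (chi^[j] ((a':ℚ)/m)).den ∧
      ((chi^[j] ((a:ℚ)/m)).num ≡ (chi^[j] ((a':ℚ)/m)).num
        [ZMOD ((chi^[j] ((a:ℚ)/m)).den : ℤ)^(k+1-j)]) := by
  intro k
  induction k with
  | zero =>
    intro m a a' hm hca hca' hmod j hj
    interval_cases j
    simpa using level0 m a a' 1 hm hca hca' (by simpa using hmod)
  | succ k IH =>
    intro m a a' hm hca hca' hmod
    -- key claim, assuming a ≤ a'
    have H : ∀ (a a' : ℕ), a.Coprime m → a'.Coprime m → a ≡ a' [MOD m^(k+2)] → a ≤ a' →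
        ∀ j ≤ k + 1, (chi^[j] ((a:ℚ)/m)).den = (chi^[j] ((a':ℚ)/m)).den ∧
        ((chi^[j] ((a:ℚ)/m)).num ≡ (chi^[j] ((a':ℚ)/m)).num
          [ZMOD ((chi^[j] ((a:ℚ)/m)).den : ℤ)^(k+2-j)]) := by
      intro a a' hca hca' hmod hle j hj
      rcases Nat.eq_zero_or_pos j with rfl | hj0
      · simpa using level0 m a a' (k+2) hm hca hca' hmod
      obtain ⟨j', rfl⟩ : ∃ j', j = j' + 1 := ⟨j - 1, by omega⟩
      have hj' : j' ≤ k := by omega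
      rcases Nat.lt_or_ge m 2 with hm1 | hm2
      · -- m = 1 : everything is an integer
        have hm1 : m = 1 := by omega
        have d1 : ((a:ℚ)/m).den = 1 := den_eq_one_div a m hm hca hm1
        have d1' : ((a':ℚ)/m).den = 1 := den_eq_one_div a' m hm hca' hm1
        have e1 := chi_iter_int d1 (j'+1)
        have e1' := chi_iter_int d1' (j'+1)
        refine ⟨e1.trans e1'.symm, ?_⟩
        rw [e1]
        simp [Int.ModEq]
      -- main case : m ≥ 2
      obtain ⟨t, ht⟩ : ∃ t, a' = a + m^(k+2) * t := by
        obtain ⟨t, ht⟩ := (Nat.modEq_iff_dvd' hle).mp hmod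
        exact ⟨t, by omega⟩
      set G := gB a m with hG
      set D := dB a m with hD
      set U := uB a m with hU
      have hmeq : m = G * D := m_eq hm2 hca
      have hceq : cB a m = G * U := c_eq hm2 hca
      have hDpos : 0 < D := dB_pos hm2 hca
      have hGpos : 0 < G := gB_pos hm2 hca
      -- cB of a'
      have hcB' : cB a' m = cB a m + m^(k+1) * t := by
        unfold cB
        rw [ht]
        have : m ^ (k+2) * t = m^(k+1) * t * m := by ring
        rw [this, Nat.add_mul_div_right _ _ (by omega : 0 < m)]
        ring
      have hgB' : gB a' m = G := by
        rw [hG]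
        unfold gB
        rw [hcB']
        have : m^(k+1) * t = m^k * t * m := by ring
        rw [this]
        exact Nat.gcd_add_mul_right_left m (cB a m) (m^k * t)
      have hdB' : dB a' m = D := by rw [hD]; unfold dB; rw [hgB']
      have huB' : uB a' m = U + G^k * D^(k+1) * t := by
        rw [hU]
        unfold uB
        rw [hcB', hgB']
        have hmt : m^(k+1) * t = G * (G^k * D^(k+1) * t) := by rw [hmeq]; ring
        rw [hmt, Nat.add_mul_div_left _ _ hGpos]
      -- numerator congruence
      have hm2e : m^(k+2) = G^(k+2) * D^(k+2) := by rw [hmeq]; ring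
      have hexp : nB a' m = nB a m + D^(k+1) *
          (a * G^k * t + G^(k+2) * D * t * U + G^(k+2) * D * t * (G^k * D^(k+1) * t)) := by
        unfold nB
        rw [huB', ht, hm2e]
        ring
      have hnum : nB a m ≡ nB a' m [MOD D^(k+1)] := by
        show _ % _ = _ % _
        rw [hexp, Nat.add_mul_mod_self_left]
      -- rewrite the iterates through one chi step
      have hstep : chi^[j'+1] ((a:ℚ)/m) = chi^[j'] (((nB a m : ℕ):ℚ)/((D:ℕ):ℚ)) := by
        rw [Function.iterate_succ_apply, chi_eq hm2 hca]
      have hstep' : chi^[j'+1] ((a':ℚ)/m) = chi^[j'] (((nB a' m : ℕ):ℚ)/((D:ℕ):ℚ)) := by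
        rw [Function.iterate_succ_apply, chi_eq hm2 hca', hdB']
      rw [hstep, hstep']
      have hres := IH D (nB a m) (nB a' m) hDpos (cop_nd hm2 hca)
        (by have := cop_nd hm2 hca'; rwa [hdB'] at this) hnum j' hj'
      have hexp2 : k + 2 - (j' + 1) = k + 1 - j' := by omega
      rw [hexp2]
      exact hres
    rcases le_total a a' with hle | hle
    · exact H a a' hca hca' hmod hle
    · intro j hj
      obtain ⟨h1, h2⟩ := H a' a hca' hca hmod.symm hle j hj
      refine ⟨h1.symm, ?_⟩
      rw [h1] at h2
      exact h2.symm


def Surv (k : ℕ) (x : ℚ) : Prop := ∀ j ≤ k, (chi^[j] x).den ≠ 1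

theorem den_iter_eq {m a a' k : ℕ} (hm : 0 < m) (hca : a.Coprime m) (hca' : a'.Coprime m)
    (h : a ≡ a' [MOD m^(k+1)]) {j : ℕ} (hj : j ≤ k) :
    (chi^[j] ((a:ℚ)/m)).den = (chi^[j] ((a':ℚ)/m)).den :=
  (congr_main k m a a' hm hca hca' h j hj).1

theorem ordEq_congr {m a a' n : ℕ} (hm : 0 < m) (hca : a.Coprime m) (hca' : a'.Coprime m)
    (h : a ≡ a' [MOD m^(n+1)]) : ordEq ((a:ℚ)/m) n ↔ ordEq ((a':ℚ)/m) n := by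
  unfold ordEq
  constructor
  · rintro ⟨h1, h2⟩
    refine ⟨by rw [← den_iter_eq hm hca hca' h le_rfl]; exact h1, fun j hj => ?_⟩
    rw [← den_iter_eq hm hca hca' h (le_of_lt hj)]; exact h2 j hj
  · rintro ⟨h1, h2⟩
    refine ⟨by rw [den_iter_eq hm hca hca' h le_rfl]; exact h1, fun j hj => ?_⟩
    rw [den_iter_eq hm hca hca' h (le_of_lt hj)]; exact h2 j hj

theorem Surv_congr {m a a' N : ℕ} (hm : 0 < m) (hca : a.Coprime m) (hca' : a'.Coprime m)
    (h : a ≡ a' [MOD m^(N+1)]) : Surv N ((a:ℚ)/m) ↔ Surv N ((a':ℚ)/m) := by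
  unfold Surv
  constructor
  · intro hs j hj
    rw [← den_iter_eq hm hca hca' h hj]; exact hs j hj
  · intro hs j hj
    rw [den_iter_eq hm hca hca' h hj]; exact hs j hj

open Finset

open Classical in
noncomputable def SF (k m : ℕ) : Finset ℕ :=
  (range (m^(k+1))).filter (fun b => b.Coprime m ∧ Surv k ((b:ℚ)/m))

open Classical in
noncomputable def OF (n N m : ℕ) : Finset ℕ :=
  (range (m^(N+1))).filter (fun b => b.Coprime m ∧ ordEq ((b:ℚ)/m) n)

theorem gcd_mod_right (x m : ℕ) : Nat.gcd x m = Nat.gcd (x % m) m :=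
  ((Nat.gcd_comm x m).trans (Nat.gcd_rec m x))

theorem cop_mod_iff (b m K : ℕ) (hK : 0 < K) :
    ((b % m^K).Coprime m) ↔ b.Coprime m := by
  unfold Nat.Coprime
  rw [gcd_mod_right (b % m^K) m, Nat.mod_mod_of_dvd b (dvd_pow_self m hK.ne'),
    ← gcd_mod_right b m]

theorem A_eq (n m : ℕ) : A n m = (OF n n m).card := by
  classical
  have e : {a : ℕ // a < m ^ (n + 1) ∧ Nat.Coprime a m ∧ ordEq ((a : ℚ) / m) n} ≃
      {a : ℕ // a ∈ OF n n m} := by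
    apply Equiv.subtypeEquivRight
    intro a
    rw [OF, Finset.mem_filter, Finset.mem_range]
  rw [A, Nat.card_congr e]
  exact Nat.card_eq_finsetCard _

theorem not_Surv_iff {N : ℕ} {x : ℚ} : ¬ Surv N x ↔ ∃ n ≤ N, ordEq x n := by
  constructor
  · intro h
    unfold Surv at h
    push_neg at h
    obtain ⟨j, hj, hden⟩ := h
    have hex : ∃ i, (chi^[i] x).den = 1 := ⟨j, hden⟩
    refine ⟨Nat.find hex, le_trans (Nat.find_le hden) hj, Nat.find_spec hex, ?_⟩
    intro i hi
    exact Nat.find_min hex hi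
  · rintro ⟨n, hn, h1, _⟩ hS
    exact hS n hn h1

theorem partition (m N : ℕ) (hm : 0 < m) :
    Nat.totient (m^(N+1)) = (SF N m).card + ∑ n ∈ range (N+1), (OF n N m).card := by
  classical
  have h1 : Nat.totient (m^(N+1)) = ((range (m^(N+1))).filter (fun b => b.Coprime m)).card := by
    rw [Nat.totient]
    congr 1
    apply Finset.filter_congr
    intro b _
    rw [Nat.coprime_comm, Nat.coprime_pow_right_iff (by omega : 0 < N+1)]
  rw [h1]
  set s := (range (m^(N+1))).filter (fun b => b.Coprime m) with hs
  have h2 := Finset.card_filter_add_card_filter_not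
    (s := s) (p := fun b : ℕ => Surv N ((b:ℚ)/m))
  have h3 : s.filter (fun b : ℕ => Surv N ((b:ℚ)/m)) = SF N m := by
    rw [hs, Finset.filter_filter]
    rfl
  have h4 : s.filter (fun b : ℕ => ¬ Surv N ((b:ℚ)/m)) = (range (N+1)).biUnion (fun n => OF n N m) := by
    ext b
    rw [Finset.mem_filter, Finset.mem_biUnion, hs, Finset.mem_filter, Finset.mem_range]
    constructor
    · rintro ⟨⟨hb1, hb2⟩, hb3⟩
      obtain ⟨n, hn, ho⟩ := not_Surv_iff.mp hb3
      refine ⟨n, Finset.mem_range.mpr (by omega), ?_⟩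
      rw [OF, Finset.mem_filter, Finset.mem_range]
      exact ⟨hb1, hb2, ho⟩
    · rintro ⟨n, hn, hb⟩
      rw [OF, Finset.mem_filter, Finset.mem_range] at hb
      rw [Finset.mem_range] at hn
      exact ⟨⟨hb.1, hb.2.1⟩, not_Surv_iff.mpr ⟨n, by omega, hb.2.2⟩⟩
  have h5 : ((range (N+1)).biUnion (fun n => OF n N m)).card = ∑ n ∈ range (N+1), (OF n N m).card := by
    apply Finset.card_biUnion
    intro n hn n' hn' hne
    apply Finset.disjoint_left.mpr
    intro b hb hb'
    simp only [OF, Finset.mem_filter] at hb hb'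
    rcases Nat.lt_or_ge n n' with h | h
    · exact hb'.2.2.2 n h hb.2.2.1
    · exact hb.2.2.2 n' (by omega) hb'.2.2.1
  rw [h3, h4] at h2
  rw [h5] at h2
  omega

theorem mem_OF {b n N m : ℕ} : b ∈ OF n N m ↔ b < m^(N+1) ∧ b.Coprime m ∧ ordEq ((b:ℚ)/m) n := by
  classical
  rw [OF, Finset.mem_filter, Finset.mem_range]

theorem mem_SF {b k m : ℕ} : b ∈ SF k m ↔ b < m^(k+1) ∧ b.Coprime m ∧ Surv k ((b:ℚ)/m) := by
  classical
  rw [SF, Finset.mem_filter, Finset.mem_range]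

theorem OF_count (m n N : ℕ) (hm : 0 < m) (hn : n ≤ N) :
    (OF n N m).card = (OF n n m).card * m^(N-n) := by
  classical
  have hX : 0 < m^(n+1) := Nat.pow_pos hm
  have key : (OF n N m).card = ((OF n n m) ×ˢ range (m^(N-n))).card := by
    apply Finset.card_bij' (i := fun b _ => (b % m^(n+1), b / m^(n+1)))
      (j := fun p _ => p.1 + m^(n+1) * p.2)
    · -- hi
      intro b hb
      rw [mem_OF] at hb
      obtain ⟨hb1, hb2, hb3⟩ := hb
      rw [Finset.mem_product, Finset.mem_range]
      constructor
      · rw [mem_OF]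
        have hmod : b % m^(n+1) ≡ b [MOD m^(n+1)] := Nat.mod_modEq b _
        have hcop : (b % m^(n+1)).Coprime m := (cop_mod_iff b m (n+1) (by omega)).mpr hb2
        exact ⟨Nat.mod_lt b hX, hcop,
          (ordEq_congr hm hcop hb2 hmod).mpr hb3⟩
      · -- b / m^(n+1) < m^(N-n)
        apply Nat.div_lt_of_lt_mul
        calc b < m^(N+1) := hb1
        _ = m^(n+1) * m^(N-n) := by rw [← pow_add]; congr 1; omega
    · -- hj
      rintro ⟨p, q⟩ hpq
      rw [Finset.mem_product, Finset.mem_range] at hpq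
      obtain ⟨hp, hq⟩ := hpq
      rw [mem_OF] at hp ⊢
      obtain ⟨hp1, hp2, hp3⟩ := hp
      have hlt : p + m^(n+1) * q < m^(N+1) := by
        have h1 : m^(N+1) = m^(n+1) * m^(N-n) := by rw [← pow_add]; congr 1; omega
        have h2 : m^(n+1) * q + m^(n+1) ≤ m^(n+1) * m^(N-n) := by
          calc m^(n+1) * q + m^(n+1) = m^(n+1) * (q + 1) := by ring
          _ ≤ m^(n+1) * m^(N-n) := Nat.mul_le_mul_left _ (by omega)
        omega
      have hmod : p ≡ p + m^(n+1) * q [MOD m^(n+1)] := by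
        show _ % _ = _ % _
        rw [Nat.add_mul_mod_self_left]
      have hcop : (p + m^(n+1) * q).Coprime m := by
        rw [← cop_mod_iff _ m (n+1) (by omega)] at hp2 ⊢
        unfold Nat.ModEq at hmod
        rw [← hmod]
        exact hp2
      exact ⟨hlt, hcop, (ordEq_congr hm hp2 hcop hmod).mp hp3⟩
    · -- left inv
      intro b hb
      simp only
      have := Nat.mod_add_div b (m^(n+1))
      omega
    · -- right inv
      rintro ⟨p, q⟩ hpq
      rw [Finset.mem_product, Finset.mem_range, mem_OF] at hpq
      have hp1 := hpq.1.1
      simp only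
      have h1 : (p + m^(n+1) * q) % m^(n+1) = p := by
        rw [Nat.add_mul_mod_self_left, Nat.mod_eq_of_lt hp1]
      have h2 : (p + m^(n+1) * q) / m^(n+1) = q := by
        rw [Nat.add_mul_div_left _ _ hX, Nat.div_eq_of_lt hp1]
        omega
      rw [h1, h2]
  rw [key, Finset.card_product, Finset.card_range]

theorem totient_mul_of_primes (a : ℕ) : ∀ b : ℕ, (∀ p, p.Prime → p ∣ a → p ∣ b) →
    Nat.totient (a * b) = a * Nat.totient b := by
  induction a using Nat.strong_induction_on with
  | _ a IH =>
    intro b hab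
    rcases Nat.eq_zero_or_pos a with rfl | ha0
    · simp
    rcases Nat.eq_or_lt_of_le ha0 with ha1 | ha2
    · rw [← ha1]; simp
    -- a ≥ 2
    have hp : a.minFac.Prime := Nat.minFac_prime (by omega)
    obtain ⟨a₂, ha₂⟩ := a.minFac_dvd
    have ha₂pos : 0 < a₂ := by
      rcases Nat.eq_zero_or_pos a₂ with rfl | h
      · omega
      · exact h
    have hlt : a₂ < a := by
      have h2 := hp.two_le
      nlinarith [ha₂]
    have hpb : a.minFac ∣ b := hab _ hp a.minFac_dvd
    have h1 : a * b = a.minFac * (a₂ * b) := by rw [← mul_assoc, ← ha₂]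
    have ha₂dvd : a₂ ∣ a := Dvd.intro_left _ ha₂.symm
    rw [h1, Nat.totient_mul_of_prime_of_dvd hp (Dvd.dvd.mul_left hpb a₂),
      IH a₂ hlt b (fun p hp' hpa => hab p hp' (dvd_trans hpa ha₂dvd)),
      ← mul_assoc, ← ha₂]

theorem totient_pow (m k : ℕ) : Nat.totient (m^(k+1)) = m^k * Nat.totient m := by
  have h1 : m^(k+1) = m^k * m := by ring
  rw [h1]
  exact totient_mul_of_primes (m^k) m (fun p hp hpa => hp.dvd_of_dvd_pow hpa)

theorem totient_eq_filter (m : ℕ) :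
    Nat.totient m = ((range m).filter (fun b => b.Coprime m)).card := by
  rw [Nat.totient]
  congr 1
  apply Finset.filter_congr
  intro b _
  rw [Nat.coprime_comm]

theorem SF_rec_le (m N : ℕ) (hm : 2 ≤ m) :
    (SF (N+1) m).card ≤ Nat.totient m *
      ∑ d ∈ m.divisors.filter (fun d => 1 < d), (m/d)^N * (SF N d).card := by
  classical
  set T : Finset (ℕ × Σ _ : ℕ, ℕ × ℕ) :=
    ((range m).filter (fun β => β.Coprime m)) ×ˢ
      ((m.divisors.filter (fun d => 1 < d)).sigma
        (fun d => (range ((m/d)^N)) ×ˢ SF N d)) with hT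
  have hcardT : T.card = Nat.totient m *
      ∑ d ∈ m.divisors.filter (fun d => 1 < d), (m/d)^N * (SF N d).card := by
    rw [hT, Finset.card_product, Finset.card_sigma, ← totient_eq_filter]
    congr 1
    apply Finset.sum_congr rfl
    intro d _
    rw [Finset.card_product, Finset.card_range]
  rw [← hcardT]
  apply Finset.card_le_card_of_injOn
    (fun b => (b % m, ⟨dB b m, ((uB b m - 1) / (dB b m)^(N+1), nB b m % (dB b m)^(N+1))⟩))
  · -- maps to
    intro b hb
    rw [Finset.mem_coe, mem_SF] at hb
    obtain ⟨hb1, hb2, hb3⟩ := hb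
    have hm0 : m ≠ 0 := by omega
    have hGpos := gB_pos hm hb2
    have hDpos := dB_pos hm hb2
    have hmeq := m_eq hm hb2
    have hceq := c_eq hm hb2
    have hXpos : 0 < (dB b m)^(N+1) := Nat.pow_pos hDpos
    have hd1 : 1 < dB b m := by
      have h1 := hb3 1 (by omega)
      rw [Function.iterate_one, chi_den hm hb2] at h1
      omega
    have hcop_nd := cop_nd hm hb2
    rw [Finset.mem_coe, hT, Finset.mem_product]
    constructor
    · rw [Finset.mem_filter, Finset.mem_range]
      refine ⟨Nat.mod_lt b (by omega), ?_⟩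
      unfold Nat.Coprime
      rw [← gcd_mod_right b m]
      exact hb2
    · rw [Finset.mem_sigma]
      refine ⟨?_, ?_⟩
      · rw [Finset.mem_filter, Nat.mem_divisors]
        exact ⟨⟨dB_dvd hm hb2, hm0⟩, hd1⟩
      · rw [Finset.mem_product, Finset.mem_range]
        constructor
        · -- e bound
          have hcpos : 0 < cB b m := Nat.succ_pos _
          have hgdvdc : gB b m ∣ cB b m := Nat.gcd_dvd_left _ _
          have hUpos : 0 < uB b m := Nat.div_pos (Nat.le_of_dvd hcpos hgdvdc) hGpos
          have hcle : cB b m ≤ m^(N+1) := by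
            unfold cB
            have : b / m < m^(N+1) := by
              apply Nat.div_lt_of_lt_mul
              calc b < m^(N+2) := hb1
              _ = m * m^(N+1) := by ring
            omega
          have hmg : m^(N+1) = gB b m * (gB b m ^ N * dB b m ^ (N+1)) := by
            calc m^(N+1) = (gB b m * dB b m)^(N+1) := by rw [← hmeq]
            _ = gB b m * (gB b m ^ N * dB b m ^ (N+1)) := by ring
          have hUle : uB b m ≤ gB b m ^ N * dB b m ^ (N+1) := by
            unfold uB
            calc cB b m / gB b m ≤ m^(N+1) / gB b m := Nat.div_le_div_right hcle
            _ = gB b m ^ N * dB b m ^ (N+1) := by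
                rw [hmg, Nat.mul_div_cancel_left _ hGpos]
          have hmd : m / dB b m = gB b m :=
            Nat.div_eq_of_eq_mul_left hDpos hmeq
          rw [hmd]
          rw [Nat.div_lt_iff_lt_mul hXpos]
          exact lt_of_lt_of_le (Nat.sub_lt hUpos one_pos) hUle
        · -- b1 ∈ SF N (dB b m)
          rw [mem_SF]
          refine ⟨Nat.mod_lt _ hXpos, ?_, ?_⟩
          · exact (cop_mod_iff (nB b m) (dB b m) (N+1) (by omega)).mpr hcop_nd
          · have hsurv : Surv N (((nB b m : ℕ):ℚ)/((dB b m : ℕ):ℚ)) := by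
              intro j hj
              rw [← chi_eq hm hb2, ← Function.iterate_succ_apply]
              exact hb3 (j+1) (by omega)
            have hcop1 := (cop_mod_iff (nB b m) (dB b m) (N+1) (by omega)).mpr hcop_nd
            exact (Surv_congr hDpos hcop1 hcop_nd
              (Nat.mod_modEq (nB b m) _)).mpr hsurv
  · -- injectivity
    intro b hb b' hb' heq
    simp only [Finset.mem_coe] at hb hb'
    rw [mem_SF] at hb hb'
    obtain ⟨hb1, hb2, hb3⟩ := hb
    obtain ⟨hb1', hb2', hb3'⟩ := hb'
    have hβ : b % m = b' % m := congrArg Prod.fst heq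
    have hsig := congrArg Prod.snd heq
    simp only at hsig hβ
    have hD' : dB b' m = dB b m := (congrArg Sigma.fst hsig).symm
    have hrest : ((uB b m - 1) / (dB b m)^(N+1), nB b m % (dB b m)^(N+1)) =
        ((uB b' m - 1) / (dB b' m)^(N+1), nB b' m % (dB b' m)^(N+1)) := by
      have h2 := (Sigma.mk.inj_iff.mp hsig).2
      rw [hD'] at h2 ⊢
      exact eq_of_heq h2
    have he : (uB b m - 1) / (dB b m)^(N+1) = (uB b' m - 1) / (dB b m)^(N+1) := by
      have := congrArg Prod.fst hrest; simpa [hD'] using this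
    have hb1eq : nB b m % (dB b m)^(N+1) = nB b' m % (dB b m)^(N+1) := by
      have := congrArg Prod.snd hrest; simpa [hD'] using this
    -- abbreviations
    have hGpos := gB_pos hm hb2
    have hDpos := dB_pos hm hb2
    have hmeq := m_eq hm hb2
    have hmeq' := m_eq hm hb2'
    have hG' : gB b' m = gB b m := by
      have h0 : gB b' m * dB b' m = gB b m * dB b m := by rw [← hmeq', ← hmeq]
      rw [hD'] at h0
      exact Nat.eq_of_mul_eq_mul_right hDpos h0
    have hR' : rB b' m = rB b m := by unfold rB; rw [hβ]
    have hcmb := cm_eq hm hb2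
    have hcmb' := cm_eq hm hb2'
    have hceq := c_eq hm hb2
    have hceq' := c_eq hm hb2'
    set G := gB b m
    set D := dB b m
    set U := uB b m
    set R := rB b m
    set X := D^(N+1) with hX
    have hXpos : 0 < X := Nat.pow_pos hDpos
    -- integer identities
    have hmZ : (m:ℤ) = (G:ℤ) * D := by exact_mod_cast congrArg (Nat.cast (R := ℤ)) hmeq
    have hbZ : (b:ℤ) + R = ((G:ℤ) * U) * m := by
      have h0 : cB b m * m = b + R := hcmb
      rw [hceq] at h0
      exact_mod_cast congrArg (Nat.cast (R := ℤ)) h0.symm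
    have hbZ' : (b':ℤ) + R = ((G:ℤ) * uB b' m) * m := by
      have h0 : cB b' m * m = b' + R := by rw [hcmb', hR']
      rw [hceq', hG'] at h0
      exact_mod_cast congrArg (Nat.cast (R := ℤ)) h0.symm
    have hnZ : (nB b m : ℤ) = (G:ℤ)^2*D*U^2 - R*U := by
      have h1 : (nB b m : ℤ) = (b:ℤ) * U := by unfold nB; push_cast; ring
      have h2 : (b:ℤ) = ((G:ℤ)*U)*m - R := by linarith
      rw [h1, h2, hmZ]; ring
    have hnZ' : (nB b' m : ℤ) = (G:ℤ)^2*D*(uB b' m)^2 - R*(uB b' m) := by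
      have h1 : (nB b' m : ℤ) = (b':ℤ) * uB b' m := by
        unfold nB; push_cast; ring
      have h2 : (b':ℤ) = ((G:ℤ)*uB b' m)*m - R := by linarith
      rw [h1, h2, hmZ]; ring
    set U' := uB b' m
    -- divisibility
    have hcong : nB b m ≡ nB b' m [MOD X] := hb1eq
    have hdvd1 : (X:ℤ) ∣ (nB b m : ℤ) - (nB b' m : ℤ) := by
      have h := Nat.modEq_iff_dvd.mp hcong
      rwa [show ((nB b' m : ℤ) - nB b m) = -((nB b m : ℤ) - nB b' m) by ring,
        dvd_neg] at h
    have hfact : (nB b m : ℤ) - (nB b' m : ℤ) =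
        ((U:ℤ) - U') * (G^2*D*((U:ℤ)+U') - R) := by
      rw [hnZ, hnZ']; ring
    -- coprimality of the cofactor with D
    have hRD : Nat.Coprime R D := (rB_cop hm hb2).coprime_dvd_right (dB_dvd hm hb2)
    have hICDR : IsCoprime (D:ℤ) (R:ℤ) := Nat.isCoprime_iff_coprime.mpr hRD.symm
    have hICW : IsCoprime (D:ℤ) (G^2*D*((U:ℤ)+U') - R) := by
      have h1 : IsCoprime (D:ℤ) (-(R:ℤ)) := hICDR.neg_right
      have h2 := h1.add_mul_left_right (G^2*((U:ℤ)+U'))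
      have h3 : -(R:ℤ) + D * (G^2*((U:ℤ)+U')) = G^2*D*((U:ℤ)+U') - R := by ring
      rwa [h3] at h2
    have hICX : IsCoprime ((X:ℕ):ℤ) (G^2*D*((U:ℤ)+U') - R) := by
      have : ((X:ℕ):ℤ) = (D:ℤ)^(N+1) := by rw [hX]; push_cast; ring
      rw [this]
      exact hICW.pow_left
    have hUU : (X:ℤ) ∣ (U:ℤ) - U' := by
      rw [hfact] at hdvd1
      exact hICX.dvd_of_dvd_mul_right hdvd1
    -- positivity of U, U'
    have hcpos : 0 < cB b m := Nat.succ_pos _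
    have hcpos' : 0 < cB b' m := Nat.succ_pos _
    have hUpos : 0 < U :=
      Nat.div_pos (Nat.le_of_dvd hcpos (Nat.gcd_dvd_left _ _)) hGpos
    have hUpos' : 0 < U' := by
      have : 0 < gB b' m := gB_pos hm hb2'
      have := Nat.div_pos (Nat.le_of_dvd hcpos' (Nat.gcd_dvd_left (cB b' m) m)) this
      exact this
    -- conclude U = U'
    have hUeq : U = U' := by
      rcases le_total U U' with hle | hle
      · obtain ⟨t, ht⟩ : X ∣ (U' - U) := by
          have h1 : ((U' - U : ℕ) : ℤ) = -((U:ℤ) - U') := by push_cast; omega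
          have h2 : (X:ℤ) ∣ ((U' - U : ℕ) : ℤ) := by rw [h1]; exact dvd_neg.mpr hUU
          exact_mod_cast h2
        have hU' : U' = U + X * t := by
          rw [← ht]; exact (Nat.add_sub_cancel' hle).symm
        have hdiv : (U + X*t - 1)/X = (U - 1)/X + t := by
          have h3 : U + X*t - 1 = (U - 1) + X*t := by omega
          rw [h3, Nat.add_mul_div_left _ _ hXpos]
        rw [hU', hdiv] at he
        have ht0 : t = 0 := by omega
        rw [ht0, Nat.mul_zero, Nat.add_zero] at hU'
        exact hU'.symm
      · obtain ⟨t, ht⟩ : X ∣ (U - U') := by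
          have h1 : ((U - U' : ℕ) : ℤ) = (U:ℤ) - U' := by push_cast; omega
          have h2 : (X:ℤ) ∣ ((U - U' : ℕ) : ℤ) := by rw [h1]; exact hUU
          exact_mod_cast h2
        have hU' : U = U' + X * t := by
          rw [← ht]; exact (Nat.add_sub_cancel' hle).symm
        have hdiv : (U' + X*t - 1)/X = (U' - 1)/X + t := by
          have h3 : U' + X*t - 1 = (U' - 1) + X*t := by omega
          rw [h3, Nat.add_mul_div_left _ _ hXpos]
        rw [hU', hdiv] at he
        have ht0 : t = 0 := by omega
        rw [ht0, Nat.mul_zero, Nat.add_zero] at hU'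
        exact hU'
    have hceqb : cB b m = cB b' m := by rw [hceq, hceq', hG', hUeq]
    have : b + R = b' + R := by rw [← hcmb]; rw [hceqb]; rw [hcmb', hR']
    omega

theorem SF0_le (m : ℕ) (hm : 2 ≤ m) : (SF 0 m).card ≤ Nat.totient m := by
  rw [totient_eq_filter]
  apply Finset.card_le_card
  intro b hb
  rw [mem_SF] at hb
  rw [Finset.mem_filter, Finset.mem_range]
  refine ⟨?_, hb.2.1⟩
  have := hb.1
  rwa [pow_one] at this

theorem sum_totient_filter (m : ℕ) (hm : 2 ≤ m) :
    ∑ d ∈ m.divisors.filter (fun d => 1 < d), Nat.totient d = m - 1 := by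
  have h1 : (1:ℕ) ∈ m.divisors := Nat.one_mem_divisors.mpr (by omega)
  have h2 : m.divisors.filter (fun d => 1 < d) = m.divisors.erase 1 := by
    ext d
    rw [Finset.mem_filter, Finset.mem_erase]
    constructor
    · rintro ⟨hd, hd1⟩; exact ⟨by omega, hd⟩
    · rintro ⟨hd1, hd⟩
      have := Nat.pos_of_mem_divisors hd
      exact ⟨hd, by omega⟩
  rw [h2]
  have h3 := Finset.add_sum_erase _ Nat.totient h1
  rw [Nat.sum_totient] at h3
  rw [Nat.totient_one] at h3
  omega

theorem SF_bound (N : ℕ) : ∀ m : ℕ, 2 ≤ m →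
    ((SF N m).card : ℝ) ≤ (Nat.totient m : ℝ) * (m:ℝ)^N * (((m:ℝ)-1)/(m:ℝ))^N := by
  induction N with
  | zero =>
    intro m hm
    have := SF0_le m hm
    simp only [pow_zero, mul_one]
    exact_mod_cast this
  | succ N IH =>
    intro m hm
    have hmR : (0:ℝ) < (m:ℝ) := by exact_mod_cast (by omega : 0 < m)
    have hq0 : (0:ℝ) ≤ ((m:ℝ)-1)/(m:ℝ) := by
      apply div_nonneg _ (le_of_lt hmR)
      have : (1:ℝ) ≤ (m:ℝ) := by exact_mod_cast (by omega : 1 ≤ m)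
      linarith
    have step1 : ((SF (N+1) m).card : ℝ) ≤ (Nat.totient m : ℝ) *
        ∑ d ∈ m.divisors.filter (fun d => 1 < d), ((m/d : ℕ):ℝ)^N * ((SF N d).card : ℝ) := by
      have := SF_rec_le m N hm
      have hcast : ((Nat.totient m * ∑ d ∈ m.divisors.filter (fun d => 1 < d),
          (m/d)^N * (SF N d).card : ℕ) : ℝ) = (Nat.totient m : ℝ) *
          ∑ d ∈ m.divisors.filter (fun d => 1 < d), ((m/d : ℕ):ℝ)^N * ((SF N d).card : ℝ) := by
        push_cast
        ring
      rw [← hcast]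
      exact_mod_cast this
    have step2 : ∀ d ∈ m.divisors.filter (fun d => 1 < d),
        ((m/d : ℕ):ℝ)^N * ((SF N d).card : ℝ) ≤
          (Nat.totient d : ℝ) * (m:ℝ)^N * (((m:ℝ)-1)/(m:ℝ))^N := by
      intro d hd
      rw [Finset.mem_filter, Nat.mem_divisors] at hd
      obtain ⟨⟨hdvd, hm0⟩, hd1⟩ := hd
      have hd2 : 2 ≤ d := by omega
      have hdm : d ≤ m := Nat.le_of_dvd (by omega) hdvd
      have hdR : (0:ℝ) < (d:ℝ) := by exact_mod_cast (by omega : 0 < d)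
      have hmd : ((m/d : ℕ):ℝ) * (d:ℝ) = (m:ℝ) := by
        exact_mod_cast congrArg (Nat.cast (R := ℝ)) (Nat.div_mul_cancel hdvd)
      have hmdnn : (0:ℝ) ≤ ((m/d : ℕ):ℝ) := by positivity
      have hqd : (0:ℝ) ≤ ((d:ℝ)-1)/(d:ℝ) := by
        apply div_nonneg _ (le_of_lt hdR)
        have : (1:ℝ) ≤ (d:ℝ) := by exact_mod_cast (by omega : 1 ≤ d)
        linarith
      have hqle : ((d:ℝ)-1)/(d:ℝ) ≤ ((m:ℝ)-1)/(m:ℝ) := by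
        rw [div_le_div_iff₀ hdR hmR]
        have : (d:ℝ) ≤ (m:ℝ) := by exact_mod_cast hdm
        nlinarith
      calc ((m/d : ℕ):ℝ)^N * ((SF N d).card : ℝ)
          ≤ ((m/d : ℕ):ℝ)^N * ((Nat.totient d : ℝ) * (d:ℝ)^N * (((d:ℝ)-1)/(d:ℝ))^N) := by
            apply mul_le_mul_of_nonneg_left (IH d hd2) (by positivity)
        _ = (Nat.totient d : ℝ) * (((m/d : ℕ):ℝ) * d)^N * (((d:ℝ)-1)/(d:ℝ))^N := by ring
        _ = (Nat.totient d : ℝ) * (m:ℝ)^N * (((d:ℝ)-1)/(d:ℝ))^N := by rw [hmd]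
        _ ≤ (Nat.totient d : ℝ) * (m:ℝ)^N * (((m:ℝ)-1)/(m:ℝ))^N := by
            apply mul_le_mul_of_nonneg_left _ (by positivity)
            exact pow_le_pow_left₀ hqd hqle N
    have step3 : ∑ d ∈ m.divisors.filter (fun d => 1 < d),
        ((m/d : ℕ):ℝ)^N * ((SF N d).card : ℝ) ≤
        ((m:ℝ) - 1) * ((m:ℝ)^N * (((m:ℝ)-1)/(m:ℝ))^N) := by
      calc ∑ d ∈ m.divisors.filter (fun d => 1 < d), ((m/d : ℕ):ℝ)^N * ((SF N d).card : ℝ)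
          ≤ ∑ d ∈ m.divisors.filter (fun d => 1 < d),
            (Nat.totient d : ℝ) * (m:ℝ)^N * (((m:ℝ)-1)/(m:ℝ))^N :=
            Finset.sum_le_sum step2
        _ = (∑ d ∈ m.divisors.filter (fun d => 1 < d), (Nat.totient d : ℝ)) *
            ((m:ℝ)^N * (((m:ℝ)-1)/(m:ℝ))^N) := by
            rw [Finset.sum_mul]
            apply Finset.sum_congr rfl
            intro d _
            ring
        _ = ((m:ℝ) - 1) * ((m:ℝ)^N * (((m:ℝ)-1)/(m:ℝ))^N) := by
            congr 1
            have h0 := sum_totient_filter m hm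
            have hcast : (∑ d ∈ m.divisors.filter (fun d => 1 < d), (Nat.totient d : ℝ))
                = ((m - 1 : ℕ) : ℝ) := by
              rw [← h0]
              push_cast
              rfl
            rw [hcast, Nat.cast_sub (by omega : 1 ≤ m), Nat.cast_one]
    calc ((SF (N+1) m).card : ℝ)
        ≤ (Nat.totient m : ℝ) *
          ∑ d ∈ m.divisors.filter (fun d => 1 < d), ((m/d : ℕ):ℝ)^N * ((SF N d).card : ℝ) := step1
      _ ≤ (Nat.totient m : ℝ) * (((m:ℝ) - 1) * ((m:ℝ)^N * (((m:ℝ)-1)/(m:ℝ))^N)) := by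
          apply mul_le_mul_of_nonneg_left step3 (by positivity)
      _ = (Nat.totient m : ℝ) * (m:ℝ)^(N+1) * (((m:ℝ)-1)/(m:ℝ))^(N+1) := by
          rw [div_pow, div_pow]
          field_simp
          ring

theorem partial_eq (M N : ℕ) (hM : 2 ≤ M) :
    ∑ n ∈ range (N+1), ((A n M : ℝ) / (Nat.totient (M^(n+1)) : ℝ))
      = 1 - ((SF N M).card : ℝ) / ((Nat.totient M : ℝ) * (M:ℝ)^N) := by
  have hM0 : 0 < M := by omega
  have hphi : 0 < Nat.totient M := Nat.totient_pos.mpr hM0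
  have hphiR : (0:ℝ) < (Nat.totient M : ℝ) := by exact_mod_cast hphi
  have hMR : (0:ℝ) < (M:ℝ) := by exact_mod_cast hM0
  have hnat : Nat.totient (M^(N+1)) = (SF N M).card + ∑ n ∈ range (N+1), A n M * M^(N-n) := by
    rw [partition M N hM0]
    congr 1
    apply Finset.sum_congr rfl
    intro n hn
    rw [Finset.mem_range] at hn
    rw [OF_count M n N hM0 (by omega), A_eq]
  have step1 : ∀ n ∈ range (N+1), (A n M : ℝ) / (Nat.totient (M^(n+1)) : ℝ)
      = ((A n M * M^(N-n) : ℕ) : ℝ) / ((Nat.totient M : ℝ) * (M:ℝ)^N) := by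
    intro n hn
    rw [Finset.mem_range] at hn
    rw [totient_pow M n]
    have hden1 : ((M^n * Nat.totient M : ℕ) : ℝ) = (M:ℝ)^n * (Nat.totient M : ℝ) := by
      push_cast; ring
    rw [hden1]
    have h1 : (0:ℝ) < (M:ℝ)^n * (Nat.totient M : ℝ) := by positivity
    have h2 : (0:ℝ) < (Nat.totient M : ℝ) * (M:ℝ)^N := by positivity
    rw [div_eq_div_iff h1.ne' h2.ne']
    have hpow : (M:ℝ)^N = (M:ℝ)^(N-n) * (M:ℝ)^n := by
      rw [← pow_add]
      congr 1
      omega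
    push_cast
    rw [hpow]
    ring
  rw [Finset.sum_congr rfl step1, ← Finset.sum_div]
  have hsum : (∑ n ∈ range (N+1), ((A n M * M^(N-n) : ℕ) : ℝ))
      = ((Nat.totient (M^(N+1)) : ℕ) : ℝ) - ((SF N M).card : ℝ) := by
    have := congrArg (Nat.cast (R := ℝ)) hnat
    push_cast at this ⊢
    linarith
  rw [hsum]
  have htot : ((Nat.totient (M^(N+1)) : ℕ) : ℝ) = (M:ℝ)^N * (Nat.totient M : ℝ) := by
    rw [totient_pow M N]
    push_cast
    ring
  rw [htot]
  field_simp

theorem A_one_zero : A 0 1 = 1 := by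
  rw [A]
  rw [Nat.card_eq_one_iff_unique]
  constructor
  · constructor
    rintro ⟨a, ha⟩ ⟨b, hb⟩
    have : a = 0 := by omega
    have : b = 0 := by omega
    subst_vars
    rfl
  · refine ⟨⟨0, by norm_num, ?_, ?_⟩⟩
    · simp [Nat.Coprime]
    · constructor
      · simp [Function.iterate_zero]
      · intro j hj; omega

theorem A_one_succ (n : ℕ) (hn : 0 < n) : A n 1 = 0 := by
  rw [A, Nat.card_eq_zero]
  left
  constructor
  rintro ⟨a, ha1, ha2, ha3⟩
  have ha0 : a = 0 := by
    have := ha1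
    simp at this
    exact this
  subst ha0
  have : ((0:ℕ):ℚ)/((1:ℕ):ℚ) = (0:ℚ) := by norm_num
  rw [this] at ha3
  exact ha3.2 0 hn (by simp [Function.iterate_zero])

end CP

theorem prob_finite_order (M : ℕ) (hM : 0 < M) :
    ∑' n : ℕ, (A n M : ℝ) / (Nat.totient (M ^ (n + 1)) : ℝ) = 1 := by
  classical
  rcases Nat.lt_or_ge M 2 with hM1 | hM2
  · -- M = 1
    have hM1 : M = 1 := by omega
    subst hM1
    rw [tsum_eq_single 0]
    · rw [CP.A_one_zero]
      norm_num
    · intro n hn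
      rw [CP.A_one_succ n (Nat.pos_of_ne_zero hn)]
      norm_num
  · -- M ≥ 2
    set f : ℕ → ℝ := fun n => (A n M : ℝ) / (Nat.totient (M ^ (n + 1)) : ℝ) with hf
    have hf0 : ∀ n, 0 ≤ f n := by
      intro n
      apply div_nonneg <;> positivity
    have hMR : (0:ℝ) < (M:ℝ) := by exact_mod_cast (by omega : 0 < M)
    have hphiR : (0:ℝ) < (Nat.totient M : ℝ) := by
      exact_mod_cast Nat.totient_pos.mpr (by omega : 0 < M)
    set q : ℝ := ((M:ℝ)-1)/(M:ℝ) with hq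
    have hq0 : 0 ≤ q := by
      apply div_nonneg _ hMR.le
      have : (1:ℝ) ≤ (M:ℝ) := by exact_mod_cast (by omega : 1 ≤ M)
      linarith
    have hq1 : q < 1 := by
      rw [hq, div_lt_one hMR]
      linarith
    have hpartial : ∀ N, ∑ n ∈ Finset.range (N+1), f n
        = 1 - ((CP.SF N M).card : ℝ) / ((Nat.totient M : ℝ) * (M:ℝ)^N) :=
      fun N => CP.partial_eq M N hM2
    have hbdd : ∀ N, ∑ n ∈ Finset.range N, f n ≤ 1 := by
      intro N
      cases N with
      | zero => simp
      | succ K =>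
        rw [hpartial K]
        have h1 : 0 ≤ ((CP.SF K M).card : ℝ) / ((Nat.totient M : ℝ) * (M:ℝ)^K) := by
          positivity
        linarith
    have hsummable : Summable f := summable_of_sum_range_le hf0 hbdd
    have hg : Filter.Tendsto (fun N : ℕ => ((CP.SF N M).card : ℝ) /
        ((Nat.totient M : ℝ) * (M:ℝ)^N)) Filter.atTop (nhds 0) := by
      apply squeeze_zero
      · intro N; positivity
      · intro N
        rw [div_le_iff₀ (by positivity)]
        calc ((CP.SF N M).card : ℝ) ≤ (Nat.totient M : ℝ) * (M:ℝ)^N * q^N :=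
            CP.SF_bound N M hM2
        _ = q^N * ((Nat.totient M : ℝ) * (M:ℝ)^N) := by ring
      · exact tendsto_pow_atTop_nhds_zero_of_lt_one hq0 hq1
    have hlim1 : Filter.Tendsto (fun N : ℕ => ∑ n ∈ Finset.range (N+1), f n)
        Filter.atTop (nhds 1) := by
      have := Filter.Tendsto.const_sub (1:ℝ) hg
      rw [sub_zero] at this
      convert this using 2 with N
      exact hpartial N
    have hlim2 : Filter.Tendsto (fun N : ℕ => ∑ n ∈ Finset.range (N+1), f n)
        Filter.atTop (nhds (∑' n, f n)) := by
      have h1 := hsummable.hasSum.tendsto_sum_nat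
      exact h1.comp (Filter.tendsto_add_atTop_nat 1)
    exact tendsto_nhds_unique hlim2 hlim1
end

section
/- There is no infinite arithmetic progression in ℚ all of whose elements have infinite order under χ, i.e., every arithmetic progression (x + n·r)_{n∈ℕ} with x ∈ ℚ, r ∈ ℚ, r ≠ 0 contains an element of finite order under χ. -/
/-- The orbit of `y` under `chi` reaches an integer. -/
def Reaches (y : ℚ) : Prop := ∃ k : ℕ, (chi^[k] y).den = 1

/-- `S` contains points approximating every point of `z + gℤ` to arbitrary `g·d^K` precision. -/
def Flex (z : ℚ) (g d : ℕ) (S : Set ℚ) : Prop :=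
  ∀ (K : ℕ) (w : ℤ), ∃ p ∈ S, ∃ h : ℤ,
    p = z + (((g : ℤ) * w + (g : ℤ) * (d : ℤ) ^ K * h : ℤ) : ℚ)

lemma reaches_of_chi {y : ℚ} (h : Reaches (chi y)) : Reaches y := by
  obtain ⟨k, hk⟩ := h
  exact ⟨k + 1, by simpa [Function.iterate_succ_apply] using hk⟩

lemma den_add_intCast (q : ℚ) (n : ℤ) : (q + (n : ℚ)).den = q.den := by
  have h1 : (q + (n : ℚ)).den ∣ q.den := by
    simpa using Rat.add_den_dvd q (n : ℚ)
  have h2 : q.den ∣ (q + (n : ℚ)).den := by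
    have := Rat.add_den_dvd (q + (n : ℚ)) ((-n : ℤ) : ℚ)
    simpa using this
  exact Nat.dvd_antisymm h1 h2

lemma den_mul_intCast_dvd (q : ℚ) (n : ℤ) : (q * (n : ℚ)).den ∣ q.den := by
  simpa using Rat.mul_den_dvd q (n : ℚ)

lemma den_chi_dvd_s19 (y : ℚ) : (chi y).den ∣ y.den := den_mul_intCast_dvd y ⌈y⌉

open Rat in
/-- If `ℓ ∣ ⌈ζ⌉` and `ζ.den = ℓ * d₂` then the denominator of `chi ζ` divides `d₂`. -/
lemma den_chi_of_dvd_ceil (ζ : ℚ) (ℓ d₂ : ℕ) (M : ℤ) (hden : ζ.den = ℓ * d₂)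
    (hceil : ⌈ζ⌉ = (ℓ : ℤ) * M) : (chi ζ).den ∣ d₂ := by
  have hl0 : (ℓ : ℤ) ≠ 0 := by
    have h := Rat.den_ne_zero ζ
    rw [hden] at h
    intro h0
    apply h
    have : ℓ = 0 := by exact_mod_cast h0
    rw [this, Nat.zero_mul]
  have key : chi ζ = (ζ.num * M) /. (d₂ : ℤ) := by
    have h1 : chi ζ = (ζ.num /. (ζ.den : ℤ)) * (((ℓ:ℤ) * M) /. 1) := by
      rw [Rat.num_divInt_den, Rat.divInt_one, chi, hceil]
    rw [h1, Rat.divInt_mul_divInt ζ.num ((ℓ:ℤ) * M) (d₁ := (ζ.den : ℤ)) (d₂ := 1), hden]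
    push_cast
    have h2 : ζ.num * ((ℓ:ℤ) * M) = (ζ.num * M) * ℓ := by ring
    have h3 : ((ℓ:ℤ) * (d₂:ℤ)) * 1 = (d₂ : ℤ) * ℓ := by ring
    rw [h2, h3, Rat.divInt_mul_right hl0]
  have hdvd := Rat.den_dvd (ζ.num * M) (d₂ : ℤ)
  rw [← key] at hdvd
  exact_mod_cast hdvd

lemma hensel (d : ℕ) (c a : ℤ) (hc : IsCoprime c (d : ℤ)) :
    ∀ (K : ℕ) (v : ℤ), ∃ w t : ℤ, c * w + a * d * w ^ 2 = v + (d : ℤ) ^ K * t := by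
  intro K
  induction K with
  | zero => intro v; exact ⟨0, c * 0 + a * d * 0 ^ 2 - v, by ring⟩
  | succ K ih =>
    intro v
    obtain ⟨w, t, hwt⟩ := ih v
    obtain ⟨x, y, hxy⟩ := hc
    refine ⟨w + (d : ℤ) ^ K * (-t * x), t * y + 2 * a * w * (-t * x) + a * (d:ℤ) ^ K * (-t * x) ^ 2, ?_⟩
    have : ((d:ℤ)) ^ (K + 1) = (d:ℤ) ^ K * d := by ring
    linear_combination hwt - (d : ℤ) ^ K * t * hxy

lemma flex_mono {z : ℚ} {g d : ℕ} {S : Set ℚ} (hf : Flex z g d S) {c : ℕ} (hc : c ∣ d) :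
    Flex z g c S := by
  obtain ⟨m, rfl⟩ := hc
  intro K w
  obtain ⟨p, hp, h, hph⟩ := hf K w
  exact ⟨p, hp, h * (m : ℤ) ^ K, by rw [hph]; push_cast; ring_nf⟩

lemma transfer (d g : ℕ) (z : ℚ) (S : Set ℚ) (a₀ : ℤ)
    (hd : 1 < d) (hzd : z.den = d) (hflex : Flex z g d S) :
    Flex (chi (z + (((g : ℤ) * a₀ : ℤ) : ℚ))) (g / Nat.gcd g d) d (chi '' S) := by
  set e := Nat.gcd g d with he
  set G : ℕ := g / e with hGdef
  set d' : ℕ := d / e with hd'def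
  have hgeG : (g : ℤ) = (e : ℤ) * (G : ℤ) := by
    exact_mod_cast (Nat.mul_div_cancel' (Nat.gcd_dvd_left g d)).symm
  have hded : (d : ℤ) = (e : ℤ) * (d' : ℤ) := by
    exact_mod_cast (Nat.mul_div_cancel' (Nat.gcd_dvd_right g d)).symm
  set ζ : ℚ := z + (((g : ℤ) * a₀ : ℤ) : ℚ) with hζ
  have hζden : ζ.den = d := by rw [hζ, den_add_intCast, hzd]
  set N : ℤ := ⌈ζ⌉ with hN
  set F : ℤ := (d : ℤ) * N - ζ.num with hF
  have hdQ : (d : ℚ) ≠ 0 := by positivity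
  have hznum : (ζ.num : ℚ) = ζ * (d : ℚ) := by
    have := Rat.num_div_den ζ
    rw [hζden] at this
    field_simp at this
    linarith [this]
  have hζQ : ζ * (d : ℚ) = (d : ℚ) * (N : ℚ) - (F : ℚ) := by
    rw [hF]; push_cast; rw [← hznum]; ring
  -- coprimality
  have hnumcop : IsCoprime ζ.num ((d : ℕ) : ℤ) := by
    rw [Int.isCoprime_iff_gcd_eq_one]
    have : Int.gcd ζ.num ((d : ℕ) : ℤ) = ζ.num.natAbs.gcd d := by
      simp [Int.gcd]
    rw [this, ← hζden]
    exact ζ.reduced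
  have hccop : IsCoprime (2 * (d : ℤ) * N - F) ((d : ℕ) : ℤ) := by
    have h2 : 2 * (d : ℤ) * N - F = ζ.num + (d : ℤ) * N := by rw [hF]; ring
    rw [h2]
    exact hnumcop.add_mul_left_left N
  intro K v
  obtain ⟨w, t, hwt⟩ := hensel d (2 * (d:ℤ) * N - F) ((G : ℤ) * d) hccop K v
  obtain ⟨p, hp, h, hph⟩ := hflex (K + 1) (a₀ + (d' : ℤ) * w)
  set W : ℤ := w + (e : ℤ) * (d : ℤ) ^ K * h with hW
  set δ : ℤ := (d : ℤ) * ((G : ℤ) * W) with hδ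
  have hpζ : p = ζ + (δ : ℚ) := by
    rw [hph, hζ]
    have hZ : ((g:ℤ) * (a₀ + (d':ℤ) * w) + (g:ℤ) * (d:ℤ) ^ (K+1) * h : ℤ)
        = (g:ℤ) * a₀ + δ := by
      rw [hδ, hW, hgeG, hded]; ring
    rw [hZ]
    push_cast
    ring
  have hceilp : ⌈p⌉ = N + δ := by rw [hpζ, Int.ceil_add_intCast, ← hN]
  set Ψ : ℤ := W * (2 * (d:ℤ) * N - F + (d:ℤ) * δ) with hΨ
  have key1 : chi p = chi ζ + ((G : ℤ) : ℚ) * ((Ψ : ℤ) : ℚ) := by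
    rw [chi, chi, hceilp, hpζ, ← hN, hΨ]
    have hδQ : ((δ : ℤ) : ℚ) = (d : ℚ) * ((G : ℚ) * (W : ℚ)) := by
      rw [hδ]; push_cast; ring
    push_cast
    linear_combination ((N:ℚ) + ζ + ((δ:ℤ):ℚ)) * hδQ + ((G:ℚ) * (W:ℚ)) * hζQ
  have key2 : Ψ = v + (d : ℤ) ^ K *
      (t + (G:ℤ) * (e:ℤ) * (d:ℤ)^2 * w * h + (e:ℤ) * h * (2*(d:ℤ)*N - F + (d:ℤ)*δ)) := by
    rw [hΨ, hW]
    linear_combination hwt + w * (d:ℤ) * hδ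
  refine ⟨chi p, ⟨p, hp, rfl⟩,
    t + (G:ℤ) * (e:ℤ) * (d:ℤ)^2 * w * h + (e:ℤ) * h * (2*(d:ℤ)*N - F + (d:ℤ)*δ), ?_⟩
  rw [key1, key2]
  push_cast
  ring

lemma master : ∀ (d : ℕ), ∀ (g : ℕ), ∀ (z : ℚ) (S : Set ℚ),
    0 < d → 0 < g → z.den ∣ d → Flex z g d S → ∃ p ∈ S, Reaches p := by
  intro d
  induction d using Nat.strong_induction_on with
  | _ d ihd =>
  intro g
  induction g using Nat.strong_induction_on with
  | _ g ihg =>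
  intro z S hd hg hzdvd hflex
  by_cases hzd : z.den = d
  swap
  · have hlt : z.den < d := lt_of_le_of_ne (Nat.le_of_dvd hd hzdvd) hzd
    exact ihd z.den hlt g z S z.den_pos hg dvd_rfl (flex_mono hflex hzdvd)
  by_cases hd1 : d = 1
  · subst hd1
    obtain ⟨p, hp, h, hph⟩ := hflex 0 0
    refine ⟨p, hp, 0, ?_⟩
    simp only [Function.iterate_zero, id]
    rw [hph, den_add_intCast, hzd]
  · have hd2 : 1 < d := by omega
    set N : ℤ := ⌈z⌉ with hN
    have hGpos : 0 < g / Nat.gcd g d :=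
      Nat.div_pos (Nat.le_of_dvd hg (Nat.gcd_dvd_left g d)) (Nat.gcd_pos_of_pos_left d hg)
    by_cases hB : ∀ ℓ : ℕ, ℓ.Prime → ℓ ∣ d → ℓ ∣ g ∧ ¬ ((ℓ : ℤ) ∣ N)
    · -- Case B : the constraint modulus shrinks
      have hmf : Nat.minFac d ∣ Nat.gcd g d :=
        Nat.dvd_gcd (hB _ (Nat.minFac_prime hd1) (Nat.minFac_dvd d)).1 (Nat.minFac_dvd d)
      have he1 : 1 < Nat.gcd g d :=
        lt_of_lt_of_le (Nat.minFac_prime hd1).one_lt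
          (Nat.le_of_dvd (Nat.gcd_pos_of_pos_left d hg) hmf)
      have hG1 : g / Nat.gcd g d < g := Nat.div_lt_self hg he1
      have htr := transfer d g z S 0 hd2 hzd hflex
      have h00 : z + (((g : ℤ) * 0 : ℤ) : ℚ) = z := by push_cast; ring
      rw [h00] at htr
      obtain ⟨p, hp, hre⟩ := ihg (g / Nat.gcd g d) hG1 (chi z) (chi '' S) hd hGpos
        (dvd_trans (den_chi_dvd_s19 z) (hzd ▸ hzdvd)) htr
      obtain ⟨p₀, hp₀, rfl⟩ := hp
      exact ⟨p₀, hp₀, reaches_of_chi hre⟩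
    · -- Case A : the denominator shrinks
      push_neg at hB
      obtain ⟨ℓ, hlp, hld, hlimp⟩ := hB
      have hex : ∃ a₀ M : ℤ, N + (g : ℤ) * a₀ = (ℓ : ℤ) * M := by
        by_cases hlg : ℓ ∣ g
        · obtain ⟨M, hM⟩ := hlimp hlg
          exact ⟨0, M, by rw [← hM]; ring⟩
        · have hcop : IsCoprime ((g : ℕ) : ℤ) ((ℓ : ℕ) : ℤ) := by
            rw [Int.isCoprime_iff_gcd_eq_one, Int.gcd_natCast_natCast]
            exact (Nat.coprime_comm.mp ((Nat.Prime.coprime_iff_not_dvd hlp).mpr hlg))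
          obtain ⟨x, y, hxy⟩ := hcop
          exact ⟨-(N * x), N * y, by linear_combination (-N) * hxy⟩
      obtain ⟨a₀, M, hM⟩ := hex
      set ζ : ℚ := z + (((g : ℤ) * a₀ : ℤ) : ℚ) with hζ
      have hζden : ζ.den = d := by rw [hζ, den_add_intCast, hzd]
      have hceil : ⌈ζ⌉ = (ℓ : ℤ) * M := by
        rw [hζ, Int.ceil_add_intCast, ← hN, hM]
      obtain ⟨d₂, hd₂⟩ := hld
      have hdvd2 : (chi ζ).den ∣ d₂ :=
        den_chi_of_dvd_ceil ζ ℓ d₂ M (hζden.trans hd₂) hceil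
      have hd₂pos : 0 < d₂ := by
        rcases Nat.eq_zero_or_pos d₂ with h | h
        · rw [h, Nat.mul_zero] at hd₂; omega
        · exact h
      have hlt : (chi ζ).den < d := by
        have h1 : (chi ζ).den ≤ d₂ := Nat.le_of_dvd hd₂pos hdvd2
        have h2 : 2 ≤ ℓ := hlp.two_le
        calc (chi ζ).den ≤ d₂ := h1
          _ < d := by rw [hd₂]; nlinarith
      have htr := transfer d g z S a₀ hd2 hzd hflex
      have hflex2 : Flex (chi ζ) (g / Nat.gcd g d) ((chi ζ).den) (chi '' S) :=
        flex_mono htr (dvd_trans hdvd2 (Dvd.intro ℓ (by rw [hd₂, Nat.mul_comm])))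
      obtain ⟨p, hp, hre⟩ := ihd ((chi ζ).den) hlt (g / Nat.gcd g d) (chi ζ) (chi '' S)
        (chi ζ).den_pos hGpos dvd_rfl hflex2
      obtain ⟨p₀, hp₀, rfl⟩ := hp
      exact ⟨p₀, hp₀, reaches_of_chi hre⟩

theorem no_infinite_order_AP (x r : ℚ) (hr : r ≠ 0) :
    ∃ n : ℕ, ∃ k : ℕ, (chi^[k] (x + n * r)).den = 1 := by
  have hP : r.num ≠ 0 := Rat.num_ne_zero.mpr hr
  set S : Set ℚ := {y | ∃ n : ℕ, y = x + (n : ℚ) * r} with hS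
  have hqr : ((r.den : ℕ) : ℚ) * r = ((r.num : ℤ) : ℚ) := by
    have h := Rat.num_div_den r
    have hd0 : ((r.den : ℕ) : ℚ) ≠ 0 := by exact_mod_cast r.den_ne_zero
    calc ((r.den : ℕ) : ℚ) * r = ((r.den : ℕ) : ℚ) * ((r.num : ℚ) / ((r.den : ℕ) : ℚ)) := by
          rw [h]
      _ = ((r.num : ℤ) : ℚ) := by field_simp
  have hflex : Flex x r.num.natAbs x.den S := by
    intro K w
    set D : ℤ := ((x.den : ℕ) : ℤ) ^ K with hD
    have hD0 : 0 < D := by positivity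
    set ε : ℤ := Int.sign r.num with hε
    have hεg : ε * (r.num.natAbs : ℤ) = r.num := Int.sign_mul_natAbs r.num
    have hεε : ε * ε = 1 := by
      rcases hP.lt_or_gt with h | h
      · rw [hε, Int.sign_eq_neg_one_of_neg h]; norm_num
      · rw [hε, Int.sign_eq_one_of_pos h]; norm_num
    set n₂ : ℤ := (ε * w) % D with hn₂
    have hn₂0 : 0 ≤ n₂ := Int.emod_nonneg _ (ne_of_gt hD0)
    have hemod := Int.emod_add_mul_ediv (ε * w) D
    have hh : ε * n₂ = w + D * (-ε * ((ε * w) / D)) := by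
      rw [hn₂]
      linear_combination ε * hemod + w * hεε
    refine ⟨x + ((r.den * n₂.toNat : ℕ) : ℚ) * r, ⟨r.den * n₂.toNat, rfl⟩,
      -ε * ((ε * w) / D), ?_⟩
    have hcast : ((r.den * n₂.toNat : ℕ) : ℚ) * r = ((n₂ * r.num : ℤ) : ℚ) := by
      push_cast
      have htn : ((n₂.toNat : ℕ) : ℚ) = ((n₂ : ℤ) : ℚ) := by
        exact_mod_cast congrArg (fun m : ℤ => (m : ℚ)) (Int.toNat_of_nonneg hn₂0)
      rw [htn, mul_comm ((r.den : ℚ)) ((n₂ : ℤ) : ℚ), mul_assoc, hqr]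
    rw [hcast]
    congr 1
    have : n₂ * r.num = (ε * n₂) * (r.num.natAbs : ℤ) := by
      rw [mul_comm ε n₂, mul_assoc, hεg]
    rw [this, hh, hD]
    push_cast
    ring
  obtain ⟨p, hp, hre⟩ := master x.den r.num.natAbs x S x.den_pos
    (Int.natAbs_pos.mpr hP) dvd_rfl hflex
  obtain ⟨n, rfl⟩ := hp
  obtain ⟨k, hk⟩ := hre
  exact ⟨n, k, hk⟩
end
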